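/- arXiv:2108.13758 — 5 statements merged into one kernel-verified Lean document; each statement's English description precedes it below -/
import Mathlib

section
/- Let 0 < μ < 1 and let z : [a,b] → ℝ be continuously differentiable. Then for every ℓ ∈ [a,b], the Φ-Riemann–Liouville fractional integral of order μ of the Φ-Caputo fractional derivative of order μ of z satisfies I^{μ;Φ}(ᶜD^{μ;Φ}z)(ℓ) = z(ℓ) − z(a). -/
/-!
Exchanging the order of integration over the triangle `a < σ < ρ < ℓ` turns the left-hand side
into `∫ₐ^ℓ z'(σ) K(σ) dσ / (Γ(μ) Γ(1-μ))`, where `K(σ) = ∫_σ^ℓ Φ'(ρ) (Φ ℓ - Φ ρ)^(μ-1)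
(Φ ρ - Φ σ)^(-μ) dρ`. The substitution `u = Φ ρ` makes `K(σ)` the Beta integral
`B(μ, 1-μ) = Γ(μ) Γ(1-μ)`, and the fundamental theorem of calculus finishes. The kernel is
nonnegative, so the same computation with `|z'|` justifies Fubini.
-/

open Real MeasureTheory Set intervalIntegral

section Dirichlet

variable {E : Type*} [NormedAddCommGroup E] {a b : ℝ}

theorem setIntegral_Ioo_indicator_Iic [NormedSpace ℝ E] (f : ℝ → E) {x : ℝ} (hx : x ∈ Ioo a b) :
    ∫ y in Ioo a b, (Iic x).indicator f y = ∫ y in a..x, f y := by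
  rw [setIntegral_indicator measurableSet_Iic, integral_of_le hx.1.le]
  congr 2
  ext y
  simp only [mem_inter_iff, mem_Ioo, mem_Iic, mem_Ioc]
  exact ⟨fun h => ⟨h.1.1, h.2⟩, fun h => ⟨⟨h.1, h.2.trans_lt hx.2⟩, h.2⟩⟩

theorem setIntegral_Ioo_indicator_Ici [NormedSpace ℝ E] (f : ℝ → E) {y : ℝ} (hy : y ∈ Ioo a b) :
    ∫ x in Ioo a b, (Ici y).indicator f x = ∫ x in y..b, f x := by
  have hset : Ioo a b ∩ Ici y = Ico y b := by
    ext x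
    simp only [mem_inter_iff, mem_Ioo, mem_Ici, mem_Ico]
    exact ⟨fun h => ⟨h.2, h.1.2⟩, fun h => ⟨⟨hy.1.trans_le h.1, h.2⟩, h.1⟩⟩
  rw [setIntegral_indicator measurableSet_Ici, hset, integral_of_le hy.2.le,
    integral_Ico_eq_integral_Ioo, integral_Ioc_eq_integral_Ioo]

theorem integrableOn_Ioo_indicator_Ici_iff (f : ℝ → E) {y : ℝ} (hy : y ∈ Ioo a b) :
    IntegrableOn ((Ici y).indicator f) (Ioo a b) ↔ IntervalIntegrable f volume y b := by
  have hset : Ici y ∩ Ioo a b = Ico y b := by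
    ext x
    simp only [mem_inter_iff, mem_Ioo, mem_Ici, mem_Ico]
    exact ⟨fun h => ⟨h.1, h.2.2⟩, fun h => ⟨h.1, hy.1.trans_le h.1, h.2⟩⟩
  rw [IntegrableOn, integrable_indicator_iff measurableSet_Ici, IntegrableOn,
    Measure.restrict_restrict measurableSet_Ici, hset,
    intervalIntegrable_iff_integrableOn_Ico_of_le hy.2.le]
  rfl

theorem integral_integral_swap_triangle [NormedSpace ℝ E] [CompleteSpace E] {F : ℝ → ℝ → E}
    (hab : a ≤ b)
    (hF : AEStronglyMeasurable (Function.uncurry F) (volume.restrict (Ioo a b ×ˢ Ioo a b)))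
    (hslice : ∀ y ∈ Ioo a b, IntervalIntegrable (F · y) volume y b)
    (hnorm : IntegrableOn (fun y => ∫ x in y..b, ‖F x y‖) (Ioo a b)) :
    ∫ x in a..b, ∫ y in a..x, F x y = ∫ y in a..b, ∫ x in y..b, F x y := by
  set G : ℝ → ℝ → E := fun x y => if y ≤ x then F x y else 0
  have hG_fst (x : ℝ) : G x = (Iic x).indicator (F x) := by
    ext y; simp [G, indicator_apply]
  have hG_snd (y : ℝ) : (G · y) = (Ici y).indicator (F · y) := by
    ext x; simp [G, indicator_apply]
  have hG_meas : AEStronglyMeasurable (Function.uncurry G)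
      ((volume.restrict (Ioo a b)).prod (volume.restrict (Ioo a b))) := by
    rw [Measure.prod_restrict, ← Measure.volume_eq_prod]
    have : Function.uncurry G = {p : ℝ × ℝ | p.2 ≤ p.1}.indicator (Function.uncurry F) := by
      ext ⟨x, y⟩; simp [G, indicator_apply]
    rw [this]
    exact hF.indicator (measurableSet_le measurable_snd measurable_fst)
  have hG_int : Integrable (Function.uncurry G)
      ((volume.restrict (Ioo a b)).prod (volume.restrict (Ioo a b))) := by
    refine (integrable_prod_iff' hG_meas).2 ⟨?_, ?_⟩
    · filter_upwards [ae_restrict_mem measurableSet_Ioo] with y hy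
      exact (hG_snd y ▸ (integrableOn_Ioo_indicator_Ici_iff _ hy).2 (hslice y hy) :)
    · refine hnorm.congr_fun (fun y hy => ?_) measurableSet_Ioo
      show ∫ x in y..b, ‖F x y‖ = ∫ x in Ioo a b, ‖G x y‖
      rw [← setIntegral_Ioo_indicator_Ici _ hy]
      congr 1 with x
      by_cases hyx : y ≤ x <;> simp [G, hyx]
  calc ∫ x in a..b, ∫ y in a..x, F x y = ∫ x in Ioo a b, ∫ y in Ioo a b, G x y := by
        rw [integral_of_le hab, integral_Ioc_eq_integral_Ioo]
        refine setIntegral_congr_fun measurableSet_Ioo fun x hx => ?_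
        rw [hG_fst, setIntegral_Ioo_indicator_Iic _ hx]
    _ = ∫ y in Ioo a b, ∫ x in Ioo a b, G x y := integral_integral_swap hG_int
    _ = ∫ y in a..b, ∫ x in y..b, F x y := by
        rw [integral_of_le hab, integral_Ioc_eq_integral_Ioo]
        refine setIntegral_congr_fun measurableSet_Ioo fun y hy => ?_
        rw [← setIntegral_Ioo_indicator_Ici _ hy, ← hG_snd]

end Dirichlet

theorem strictMonoOn_Icc_of_hasDerivAt_pos {f f' : ℝ → ℝ} {a b : ℝ}
    (hf : ∀ x ∈ Icc a b, HasDerivAt f (f' x) x) (hf' : ∀ x ∈ Icc a b, 0 < f' x) :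
    StrictMonoOn f (Icc a b) :=
  strictMonoOn_of_deriv_pos (convex_Icc a b)
    (fun x hx => (hf x hx).continuousAt.continuousWithinAt) fun x hx => by
      rw [interior_Icc] at hx
      rw [(hf x (Ioo_subset_Icc_self hx)).deriv]
      exact hf' x (Ioo_subset_Icc_self hx)

theorem integral_sub_rpow_mul_sub_rpow {α β p q : ℝ} (hα : 0 < α) (hβ : 0 < β) (hpq : p < q) :
    ∫ u in p..q, (q - u) ^ (α - 1) * (u - p) ^ (β - 1) =
      Gamma α * Gamma β / Gamma (α + β) * (q - p) ^ (α + β - 1) := by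
  have hd : 0 < q - p := sub_pos.2 hpq
  have hshift : ∫ u in p..q, (q - u) ^ (α - 1) * (u - p) ^ (β - 1) =
      ∫ x in 0..q - p, x ^ (β - 1) * (q - p - x) ^ (α - 1) := by
    simpa [sub_sub, add_comm p, mul_comm] using
      (integral_comp_add_right (fun u => (q - u) ^ (α - 1) * (u - p) ^ (β - 1)) p
        (a := 0) (b := q - p)).symm
  have hcomplex : ((∫ x in 0..q - p, x ^ (β - 1) * (q - p - x) ^ (α - 1) : ℝ) : ℂ) =
      ((q - p : ℝ) : ℂ) ^ ((β : ℂ) + α - 1) * Complex.betaIntegral β α := by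
    rw [← Complex.betaIntegral_scaled _ _ hd, ← integral_ofReal]
    refine integral_congr fun x hx => ?_
    rw [uIcc_of_le hd.le] at hx
    push_cast
    rw [Complex.ofReal_cpow hx.1, Complex.ofReal_cpow (by linarith [hx.2])]
    push_cast
    ring_nf
  have hGamma := Complex.Gamma_mul_Gamma_eq_betaIntegral (s := β) (t := α)
    (by simpa using hβ) (by simpa using hα)
  have hB : Complex.betaIntegral β α = ((Gamma α * Gamma β / Gamma (α + β) : ℝ) : ℂ) := by
    have hne : Complex.Gamma ((β : ℂ) + α) ≠ 0 := by
      rw [← Complex.ofReal_add, Complex.Gamma_ofReal]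
      exact_mod_cast (Gamma_pos_of_pos (add_pos hβ hα)).ne'
    rw [eq_div_of_mul_eq hne ((mul_comm _ _).trans hGamma.symm)]
    push_cast
    simp only [← Complex.Gamma_ofReal, Complex.ofReal_add]
    ring_nf
  apply Complex.ofReal_injective
  rw [hshift, hcomplex, hB, Complex.ofReal_mul, Complex.ofReal_cpow hd.le]
  push_cast
  ring_nf

theorem integral_deriv_mul_sub_rpow_mul_sub_rpow {Φ Φ' : ℝ → ℝ} {α β p q : ℝ}
    (hα : 0 < α) (hβ : 0 < β) (hpq : p < q)
    (hΦ : ∀ x ∈ Icc p q, HasDerivAt Φ (Φ' x) x) (hΦ' : ∀ x ∈ Icc p q, 0 < Φ' x) :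
    ∫ x in p..q, Φ' x * ((Φ q - Φ x) ^ (α - 1) * (Φ x - Φ p) ^ (β - 1)) =
      Gamma α * Gamma β / Gamma (α + β) * (Φ q - Φ p) ^ (α + β - 1) := by
  have hΦpq : Φ p < Φ q := strictMonoOn_Icc_of_hasDerivAt_pos hΦ hΦ'
    (left_mem_Icc.2 hpq.le) (right_mem_Icc.2 hpq.le) hpq
  have hsubst := integral_Icc_deriv_smul_of_deriv_nonneg
    (g := fun u => (Φ q - u) ^ (α - 1) * (u - Φ p) ^ (β - 1))
    (fun x hx => (hΦ x hx).continuousAt.continuousWithinAt)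
    (fun x hx => hΦ x (Ioo_subset_Icc_self hx))
    (fun x hx => (hΦ' x (Ioo_subset_Icc_self hx)).le)
    hpq.le
  simp only [smul_eq_mul, integral_Icc_eq_integral_Ioc, ← integral_of_le hpq.le,
    ← integral_of_le hΦpq.le] at hsubst
  rw [hsubst, integral_sub_rpow_mul_sub_rpow hα hβ hΦpq]

section CaputoKernel

variable {Φ Φ' : ℝ → ℝ} {μ : ℝ}

theorem integral_caputo_kernel (hμ0 : 0 < μ) (hμ1 : μ < 1) {σ ℓ : ℝ} (hσℓ : σ < ℓ)
    (hΦ : ∀ x ∈ Icc σ ℓ, HasDerivAt Φ (Φ' x) x) (hΦ' : ∀ x ∈ Icc σ ℓ, 0 < Φ' x) :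
    ∫ ρ in σ..ℓ, Φ' ρ * ((Φ ℓ - Φ ρ) ^ (μ - 1) * (Φ ρ - Φ σ) ^ (-μ)) =
      Gamma μ * Gamma (1 - μ) := by
  have h := integral_deriv_mul_sub_rpow_mul_sub_rpow hμ0 (sub_pos.2 hμ1) hσℓ hΦ hΦ'
  rwa [add_sub_cancel, sub_self, rpow_zero, Gamma_one, div_one, mul_one,
    sub_sub_cancel_left] at h

theorem caputo_kernel_nonneg {a ℓ σ ρ : ℝ}
    (hΦ : ∀ x ∈ Icc a ℓ, HasDerivAt Φ (Φ' x) x) (hΦ' : ∀ x ∈ Icc a ℓ, 0 < Φ' x)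
    (haσ : a ≤ σ) (hσρ : σ ≤ ρ) (hρℓ : ρ ≤ ℓ) :
    0 ≤ Φ' ρ * ((Φ ℓ - Φ ρ) ^ (μ - 1) * (Φ ρ - Φ σ) ^ (-μ)) := by
  have hmono := (strictMonoOn_Icc_of_hasDerivAt_pos hΦ hΦ').monotoneOn
  have hσ : σ ∈ Icc a ℓ := ⟨haσ, hσρ.trans hρℓ⟩
  have hρ : ρ ∈ Icc a ℓ := ⟨haσ.trans hσρ, hρℓ⟩
  have h1 : 0 ≤ Φ ℓ - Φ ρ := sub_nonneg.2 (hmono hρ ⟨hρ.1.trans hρℓ, le_rfl⟩ hρℓ)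
  have h2 : 0 ≤ Φ ρ - Φ σ := sub_nonneg.2 (hmono hσ hρ hσρ)
  have h3 := (hΦ' ρ hρ).le
  positivity

theorem aestronglyMeasurable_caputo_kernel_mul {z' : ℝ → ℝ} {a ℓ : ℝ}
    (hΦ : ∀ x ∈ Icc a ℓ, HasDerivAt Φ (Φ' x) x) (hz' : ContinuousOn z' (Icc a ℓ)) :
    AEStronglyMeasurable
      (Function.uncurry fun ρ σ => Φ' ρ * ((Φ ℓ - Φ ρ) ^ (μ - 1) * (Φ ρ - Φ σ) ^ (-μ)) * z' σ)
      (volume.restrict (Ioo a ℓ ×ˢ Ioo a ℓ)) := by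
  have hS : MeasurableSet (Ioo a ℓ ×ˢ Ioo a ℓ) := measurableSet_Ioo.prod measurableSet_Ioo
  have hfst : MapsTo Prod.fst (Ioo a ℓ ×ˢ Ioo a ℓ) (Icc a ℓ) :=
    fun p hp => Ioo_subset_Icc_self hp.1
  have hsnd : MapsTo Prod.snd (Ioo a ℓ ×ˢ Ioo a ℓ) (Icc a ℓ) :=
    fun p hp => Ioo_subset_Icc_self hp.2
  have hΦc : ContinuousOn Φ (Icc a ℓ) := fun x hx => (hΦ x hx).continuousAt.continuousWithinAt
  have hrpow (e : ℝ) : Measurable fun t : ℝ => t ^ e := by fun_prop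
  have hΦ₁ := (hΦc.comp continuousOn_fst hfst).aemeasurable (μ := volume) hS
  have hΦ₂ := (hΦc.comp continuousOn_snd hsnd).aemeasurable (μ := volume) hS
  have hΦ'₁ : AEMeasurable (fun p : ℝ × ℝ => Φ' p.1) (volume.restrict (Ioo a ℓ ×ˢ Ioo a ℓ)) :=
    ((measurable_deriv Φ).comp measurable_fst).aemeasurable.congr <|
      (ae_restrict_mem hS).mono fun p hp => (hΦ p.1 (hfst hp)).deriv
  have hz'₂ := (hz'.comp continuousOn_snd hsnd).aemeasurable (μ := volume) hS
  exact (hΦ'₁.mul (((hrpow _).comp_aemeasurable (aemeasurable_const.sub hΦ₁)).mul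
    ((hrpow _).comp_aemeasurable (hΦ₁.sub hΦ₂)))).mul hz'₂ |>.aestronglyMeasurable

theorem integral_integral_caputo_kernel_mul_deriv {z z' : ℝ → ℝ} (hμ0 : 0 < μ) (hμ1 : μ < 1)
    {a ℓ : ℝ} (haℓ : a ≤ ℓ)
    (hΦ : ∀ x ∈ Icc a ℓ, HasDerivAt Φ (Φ' x) x) (hΦ' : ∀ x ∈ Icc a ℓ, 0 < Φ' x)
    (hz : ∀ x ∈ Icc a ℓ, HasDerivAt z (z' x) x) (hz' : ContinuousOn z' (Icc a ℓ)) :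
    ∫ ρ in a..ℓ, ∫ σ in a..ρ, Φ' ρ * ((Φ ℓ - Φ ρ) ^ (μ - 1) * (Φ ρ - Φ σ) ^ (-μ)) * z' σ =
      Gamma μ * Gamma (1 - μ) * (z ℓ - z a) := by
  have hmeas := aestronglyMeasurable_caputo_kernel_mul (μ := μ) hΦ hz'
  set k : ℝ → ℝ → ℝ := fun ρ σ => Φ' ρ * ((Φ ℓ - Φ ρ) ^ (μ - 1) * (Φ ρ - Φ σ) ^ (-μ))
  have hk_int : ∀ σ ∈ Ioo a ℓ, ∫ ρ in σ..ℓ, k ρ σ = Gamma μ * Gamma (1 - μ) := fun σ hσ =>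
    integral_caputo_kernel hμ0 hμ1 hσ.2
      (fun x hx => hΦ x ⟨hσ.1.le.trans hx.1, hx.2⟩) (fun x hx => hΦ' x ⟨hσ.1.le.trans hx.1, hx.2⟩)
  have hΓ : Gamma μ * Gamma (1 - μ) ≠ 0 :=
    (mul_pos (Gamma_pos_of_pos hμ0) (Gamma_pos_of_pos (sub_pos.2 hμ1))).ne'
  have hslice : ∀ σ ∈ Ioo a ℓ, IntervalIntegrable (fun ρ => k ρ σ * z' σ) volume σ ℓ :=
    fun σ hσ => (intervalIntegrable_of_integral_ne_zero (hk_int σ hσ ▸ hΓ)).mul_const _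
  have hnorm : IntegrableOn (fun σ => ∫ ρ in σ..ℓ, ‖k ρ σ * z' σ‖) (Ioo a ℓ) := by
    refine IntegrableOn.congr_fun
      ((hz'.norm.integrableOn_Icc.mono_set Ioo_subset_Icc_self).const_mul (Gamma μ * Gamma (1 - μ)))
      (fun σ hσ => ?_) measurableSet_Ioo
    rw [← hk_int σ hσ, ← intervalIntegral.integral_mul_const]
    refine integral_congr fun ρ hρ => ?_
    rw [uIcc_of_le hσ.2.le] at hρ
    rw [norm_mul, Real.norm_of_nonneg (caputo_kernel_nonneg hΦ hΦ' hσ.1.le hρ.1 hρ.2)]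
  rw [integral_integral_swap_triangle haℓ hmeas hslice hnorm]
  calc ∫ σ in a..ℓ, ∫ ρ in σ..ℓ, k ρ σ * z' σ
        = ∫ σ in a..ℓ, Gamma μ * Gamma (1 - μ) * z' σ := by
        rw [integral_of_le haℓ, integral_of_le haℓ, integral_Ioc_eq_integral_Ioo,
          integral_Ioc_eq_integral_Ioo]
        refine setIntegral_congr_fun measurableSet_Ioo fun σ hσ => ?_
        rw [intervalIntegral.integral_mul_const, hk_int σ hσ]
    _ = Gamma μ * Gamma (1 - μ) * (z ℓ - z a) := by
        rw [intervalIntegral.integral_const_mul, integral_eq_sub_of_hasDerivAt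
          (fun x hx => hz x (by rwa [uIcc_of_le haℓ] at hx)) (hz'.intervalIntegrable_of_Icc haℓ)]

end CaputoKernel

theorem rl_integral_of_caputo_deriv_general
    (a b : ℝ)
    (Φ Φ' : ℝ → ℝ)
    (hΦd : ∀ x ∈ Icc a b, HasDerivAt Φ (Φ' x) x)
    (hΦ'pos : ∀ x ∈ Icc a b, 0 < Φ' x)
    (μ : ℝ) (hμ0 : 0 < μ) (hμ1 : μ < 1)
    (z z' : ℝ → ℝ)
    (hzd : ∀ x ∈ Icc a b, HasDerivAt z (z' x) x)
    (hz'c : ContinuousOn z' (Icc a b)) :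
    ∀ ℓ ∈ Icc a b,
      (1 / Real.Gamma μ) *
        (∫ ρ in a..ℓ, Φ' ρ * (Φ ℓ - Φ ρ) ^ (μ - 1) *
          ((1 / Real.Gamma (1 - μ)) * ∫ σ in a..ρ, (Φ ρ - Φ σ) ^ (-μ) * z' σ))
      = z ℓ - z a := by
  intro ℓ hℓ
  have hsub : Icc a ℓ ⊆ Icc a b := Icc_subset_Icc_right hℓ.2
  have hswap := integral_integral_caputo_kernel_mul_deriv hμ0 hμ1 hℓ.1 (fun x hx => hΦd x (hsub hx))
    (fun x hx => hΦ'pos x (hsub hx)) (fun x hx => hzd x (hsub hx)) (hz'c.mono hsub)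
  have hinner (ρ : ℝ) : Φ' ρ * (Φ ℓ - Φ ρ) ^ (μ - 1) *
      ((1 / Gamma (1 - μ)) * ∫ σ in a..ρ, (Φ ρ - Φ σ) ^ (-μ) * z' σ) =
      1 / Gamma (1 - μ) *
        ∫ σ in a..ρ, Φ' ρ * ((Φ ℓ - Φ ρ) ^ (μ - 1) * (Φ ρ - Φ σ) ^ (-μ)) * z' σ := by
    rw [mul_left_comm, ← intervalIntegral.integral_const_mul]
    congr 2 with σ
    ring
  simp_rw [hinner, intervalIntegral.integral_const_mul, hswap]
  have hΓμ := Gamma_pos_of_pos hμ0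
  have hΓ1μ := Gamma_pos_of_pos (sub_pos.2 hμ1)
  field_simp

/-- For `0 < μ < 1` and `z` continuously differentiable on `[a,b]`,
the Φ-Riemann–Liouville fractional integral of order μ of the Φ-Caputo
fractional derivative of order μ of z satisfies
`I^{μ;Φ}(ᶜD^{μ;Φ}z)(ℓ) = z(ℓ) − z(a)` for every `ℓ ∈ [a,b]`. -/
theorem rl_integral_of_caputo_deriv
    (a b : ℝ) (hab : a < b)
    (Φ Φ' : ℝ → ℝ)
    (hΦd : ∀ x ∈ Icc a b, HasDerivAt Φ (Φ' x) x)
    (hΦ'c : ContinuousOn Φ' (Icc a b))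
    (hΦ'pos : ∀ x ∈ Icc a b, 0 < Φ' x)
    (μ : ℝ) (hμ0 : 0 < μ) (hμ1 : μ < 1)
    (z z' : ℝ → ℝ)
    (hzd : ∀ x ∈ Icc a b, HasDerivAt z (z' x) x)
    (hz'c : ContinuousOn z' (Icc a b)) :
    ∀ ℓ ∈ Icc a b,
      (1 / Real.Gamma μ) *
        (∫ ρ in a..ℓ, Φ' ρ * (Φ ℓ - Φ ρ) ^ (μ - 1) *
          ((1 / Real.Gamma (1 - μ)) * ∫ σ in a..ρ, (Φ ρ - Φ σ) ^ (-μ) * z' σ))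
      = z ℓ - z a :=
  rl_integral_of_caputo_deriv_general a b Φ Φ' hΦd hΦ'pos μ hμ0 hμ1 z z' hzd hz'c
end

section
/- Let p > 0, q > 0, ω ∈ ℝ and λ > 0 with |ω| < λ^p. Then ∫_a^∞ e^{−λ(Φ(ℓ)−Φ(a))} (Φ(ℓ)−Φ(a))^{q−1} E_{p,q}(ω (Φ(ℓ)−Φ(a))^p) Φ'(ℓ) dℓ = λ^{p−q}/(λ^p − ω). In particular (q = 1), ∫_a^∞ e^{−λ(Φ(ℓ)−Φ(a))} E_p(ω (Φ(ℓ)−Φ(a))^p) Φ'(ℓ) dℓ = λ^{p−1}/(λ^p − ω). -/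
open Real MeasureTheory Set Filter

/-- Two-parameter Mittag-Leffler function `E_{p,q}(x) = ∑_{k=0}^∞ x^k / Γ(pk+q)`;
the one-parameter function is `E_p = E_{p,1}`. -/
noncomputable def mittagLeffler (p q x : ℝ) : ℝ :=
  ∑' k : ℕ, x ^ k / Real.Gamma (p * k + q)

/-!
The substitution `t = Φ(ℓ) − Φ(a)` reduces the generalized Laplace transform to the classical
one on `(0, ∞)`. There, `t^{q−1} E_{p,q}(ω t^p) = ∑ ωᵏ t^{pk+q−1} / Γ(pk+q)`, each term has
transform `ωᵏ λ^{−(pk+q)}`, and for `|ω| < λ^p` the series of absolute values converges, so the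
series may be integrated termwise and sums geometrically to `λ^{p−q} / (λ^p − ω)`.
-/

lemma image_Ioi_eq_Ioi_of_tendsto_atTop {f : ℝ → ℝ} {a : ℝ} (hcont : ContinuousOn f (Ici a))
    (hmono : StrictMonoOn f (Ici a)) (htop : Tendsto f atTop atTop) :
    f '' Ioi a = Ioi (f a) := by
  refine Subset.antisymm ?_ fun y hy => ?_
  · rintro _ ⟨x, hx, rfl⟩
    exact hmono self_mem_Ici (mem_Ici.2 hx.le) hx
  · obtain ⟨b, hyb, hab⟩ := ((htop.eventually_gt_atTop y).and (eventually_ge_atTop a)).exists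
    exact image_mono Ioc_subset_Ioi_self <|
      intermediate_value_Ioc hab (hcont.mono Icc_subset_Ici_self) ⟨hy, hyb.le⟩

theorem integral_comp_sub_mul_deriv_Ioi {Φ Φ' : ℝ → ℝ} {a : ℝ}
    (hΦd : ∀ x ∈ Ici a, HasDerivAt Φ (Φ' x) x) (hΦ'pos : ∀ x ∈ Ici a, 0 < Φ' x)
    (hΦtop : Tendsto Φ atTop atTop) (g : ℝ → ℝ) :
    ∫ ℓ in Ioi a, g (Φ ℓ - Φ a) * Φ' ℓ = ∫ t in Ioi 0, g t := by
  set Ψ : ℝ → ℝ := fun x => Φ x - Φ a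
  have hΨd : ∀ x ∈ Ici a, HasDerivAt Ψ (Φ' x) x := fun x hx => (hΦd x hx).sub_const _
  have hcont : ContinuousOn Ψ (Ici a) := fun x hx => (hΨd x hx).continuousAt.continuousWithinAt
  have hmono : StrictMonoOn Ψ (Ici a) :=
    strictMonoOn_of_hasDerivWithinAt_pos (convex_Ici a) hcont
      (fun x hx => (hΨd x (interior_subset hx)).hasDerivWithinAt)
      (fun x hx => hΦ'pos x (interior_subset hx))
  have himage : Ψ '' Ioi a = Ioi 0 := by
    simpa [Ψ] using image_Ioi_eq_Ioi_of_tendsto_atTop hcont hmono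
      (tendsto_atTop_add_const_right _ _ hΦtop)
  rw [← himage, integral_image_eq_integral_abs_deriv_smul measurableSet_Ioi
    (fun x (hx : a < x) => (hΨd x hx.le).hasDerivWithinAt)
    (hmono.injOn.mono Ioi_subset_Ici_self)]
  refine setIntegral_congr_fun measurableSet_Ioi fun x (hx : a < x) => ?_
  rw [smul_eq_mul, abs_of_pos (hΦ'pos x hx.le), mul_comm]

lemma integral_norm_const_mul_rpow_mul_exp_neg_mul_Ioi {c s r : ℝ} (hs : 0 < s) (hr : 0 < r) :
    ∫ t in Ioi 0, ‖c * (t ^ (s - 1) * exp (-(r * t)))‖ = |c| * ((1 / r) ^ s * Gamma s) := by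
  rw [← integral_rpow_mul_exp_neg_mul_Ioi hs hr, ← integral_const_mul]
  refine setIntegral_congr_fun measurableSet_Ioi fun t (ht : 0 < t) => ?_
  rw [norm_mul, Real.norm_eq_abs, norm_of_nonneg (by positivity)]

theorem integral_tsum_mul_rpow_mul_exp_neg_mul_Ioi {c s : ℕ → ℝ} {r : ℝ} (hs : ∀ k, 0 < s k)
    (hr : 0 < r) (hsum : Summable fun k => |c k| * ((1 / r) ^ s k * Gamma (s k))) :
    ∫ t in Ioi 0, ∑' k, c k * (t ^ (s k - 1) * exp (-(r * t))) =
      ∑' k, c k * ((1 / r) ^ s k * Gamma (s k)) := by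
  have hint (k : ℕ) : IntegrableOn (fun t => t ^ (s k - 1) * exp (-(r * t))) (Ioi 0) :=
    .of_integral_ne_zero <| by rw [integral_rpow_mul_exp_neg_mul_Ioi (hs k) hr]; positivity [hs k]
  rw [← integral_tsum_of_summable_integral_norm (fun k => (hint k).const_mul (c k))
    (by simpa only [integral_norm_const_mul_rpow_mul_exp_neg_mul_Ioi (hs _) hr] using hsum)]
  simp only [integral_const_mul, integral_rpow_mul_exp_neg_mul_Ioi (hs _) hr]

lemma hasSum_pow_mul_one_div_rpow {p q ω r : ℝ} (hr : 0 < r) (hω : |ω| < r ^ p) :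
    HasSum (fun k : ℕ => ω ^ k * (1 / r) ^ (p * k + q)) (r ^ (p - q) / (r ^ p - ω)) := by
  have hrp : 0 < r ^ p := rpow_pos_of_pos hr p
  have hratio : |ω / r ^ p| < 1 := by rwa [abs_div, abs_of_pos hrp, div_lt_one hrp]
  have hterm (k : ℕ) : ω ^ k * (1 / r) ^ (p * k + q) = (r ^ q)⁻¹ * (ω / r ^ p) ^ k := by
    rw [one_div, inv_rpow hr.le, rpow_add hr, rpow_mul hr.le, rpow_natCast, div_pow]
    field_simp
  have hsum : (r ^ q)⁻¹ * (1 - ω / r ^ p)⁻¹ = r ^ (p - q) / (r ^ p - ω) := by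
    have : r ^ p - ω ≠ 0 := by linarith [le_abs_self ω]
    rw [rpow_sub hr]
    field_simp
  simpa only [hterm, hsum] using (hasSum_geometric_of_abs_lt_one hratio).mul_left (r ^ q)⁻¹

lemma exp_mul_rpow_mul_mittagLeffler_eq_tsum {p q ω r t : ℝ} (ht : 0 < t) :
    exp (-r * t) * t ^ (q - 1) * mittagLeffler p q (ω * t ^ p) =
      ∑' k : ℕ, ω ^ k / Gamma (p * k + q) * (t ^ (p * k + q - 1) * exp (-(r * t))) := by
  rw [mittagLeffler, ← tsum_mul_left]
  refine tsum_congr fun k => ?_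
  rw [mul_pow, ← rpow_natCast (t ^ p), ← rpow_mul ht.le, sub_eq_add_neg (p * k + q),
    add_assoc, rpow_add ht, ← sub_eq_add_neg, neg_mul]
  ring

theorem integral_exp_mul_rpow_mul_mittagLeffler {p q ω r : ℝ} (hp : 0 ≤ p) (hq : 0 < q)
    (hr : 0 < r) (hω : |ω| < r ^ p) :
    ∫ t in Ioi 0, exp (-r * t) * t ^ (q - 1) * mittagLeffler p q (ω * t ^ p) =
      r ^ (p - q) / (r ^ p - ω) := by
  have hs (k : ℕ) : 0 < p * k + q := by positivity
  have hcoef (x : ℝ) (k : ℕ) :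
      x ^ k / Gamma (p * k + q) * ((1 / r) ^ (p * k + q) * Gamma (p * k + q)) =
        x ^ k * (1 / r) ^ (p * k + q) := by
    field_simp [(Gamma_pos_of_pos (hs k)).ne']
  rw [setIntegral_congr_fun measurableSet_Ioi fun _ ht => exp_mul_rpow_mul_mittagLeffler_eq_tsum ht,
    integral_tsum_mul_rpow_mul_exp_neg_mul_Ioi hs hr]
  · simpa only [hcoef] using (hasSum_pow_mul_one_div_rpow hr hω).tsum_eq
  · simp only [abs_div, abs_pow, abs_of_pos (Gamma_pos_of_pos (hs _)), hcoef]
    exact (hasSum_pow_mul_one_div_rpow (q := q) hr (by rwa [abs_abs])).summable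

theorem generalized_laplace_of_mittagLeffler_general
    (a : ℝ) (Φ Φ' : ℝ → ℝ)
    (hΦd : ∀ x ∈ Ici a, HasDerivAt Φ (Φ' x) x)
    (hΦ'pos : ∀ x ∈ Ici a, 0 < Φ' x)
    (hΦtop : Tendsto Φ atTop atTop)
    (p q ω lam : ℝ) (hp : 0 < p) (hq : 0 < q) (hlam : 0 < lam)
    (hω : |ω| < lam ^ p) :
    (∫ ℓ in Ioi a,
        Real.exp (-lam * (Φ ℓ - Φ a)) * (Φ ℓ - Φ a) ^ (q - 1) *
          mittagLeffler p q (ω * (Φ ℓ - Φ a) ^ p) * Φ' ℓ)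
      = lam ^ (p - q) / (lam ^ p - ω) ∧
    (∫ ℓ in Ioi a,
        Real.exp (-lam * (Φ ℓ - Φ a)) *
          mittagLeffler p 1 (ω * (Φ ℓ - Φ a) ^ p) * Φ' ℓ)
      = lam ^ (p - 1) / (lam ^ p - ω) := by
  have htransform (q : ℝ) (hq : 0 < q) := (integral_comp_sub_mul_deriv_Ioi hΦd hΦ'pos hΦtop
    fun t => exp (-lam * t) * t ^ (q - 1) * mittagLeffler p q (ω * t ^ p)).trans
      (integral_exp_mul_rpow_mul_mittagLeffler hp.le hq hlam hω)
  refine ⟨htransform q hq, ?_⟩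
  simpa only [sub_self, rpow_zero, mul_one] using htransform 1 one_pos

/-- For `p, q > 0`, `ω ∈ ℝ`, `λ > 0` with `|ω| < λ^p`, the generalized
Laplace transform of `(Φ(·)−Φ(a))^{q−1} E_{p,q}(ω(Φ(·)−Φ(a))^p)` equals
`λ^{p−q}/(λ^p − ω)`; in particular (`q = 1`), the transform of
`E_p(ω(Φ(·)−Φ(a))^p)` equals `λ^{p−1}/(λ^p − ω)`. -/
theorem generalized_laplace_of_mittagLeffler
    (a : ℝ) (Φ Φ' : ℝ → ℝ)
    (hΦd : ∀ x ∈ Ici a, HasDerivAt Φ (Φ' x) x)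
    (hΦ'c : ContinuousOn Φ' (Ici a))
    (hΦ'pos : ∀ x ∈ Ici a, 0 < Φ' x)
    (hΦtop : Tendsto Φ atTop atTop)
    (p q ω lam : ℝ) (hp : 0 < p) (hq : 0 < q) (hlam : 0 < lam)
    (hω : |ω| < lam ^ p) :
    (∫ ℓ in Ioi a,
        Real.exp (-lam * (Φ ℓ - Φ a)) * (Φ ℓ - Φ a) ^ (q - 1) *
          mittagLeffler p q (ω * (Φ ℓ - Φ a) ^ p) * Φ' ℓ)
      = lam ^ (p - q) / (lam ^ p - ω) ∧
    (∫ ℓ in Ioi a,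
        Real.exp (-lam * (Φ ℓ - Φ a)) *
          mittagLeffler p 1 (ω * (Φ ℓ - Φ a) ^ p) * Φ' ℓ)
      = lam ^ (p - 1) / (lam ^ p - ω) :=
  generalized_laplace_of_mittagLeffler_general a Φ Φ' hΦd hΦ'pos hΦtop p q ω lam hp hq hlam hω
end

section
/- Let μ > 0 and let z : [a,∞) → ℝ be continuous and of Φ-exponential order, i.e. there exist M ≥ 0 and c ∈ ℝ with |z(ℓ)| ≤ M e^{c(Φ(ℓ)−Φ(a))} for all ℓ ≥ a. Then for every λ > max(c, 0), the generalized Laplace transform of the Φ-Riemann–Liouville fractional integral I^{μ;Φ}z satisfies L_Φ{I^{μ;Φ}z}(λ) = L_Φ{z}(λ)/λ^μ. -/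
/-!
Write `w ρ = e^{-λ(Φ ρ - Φ a)} z(ρ) Φ'(ρ)` for the integrand of `L_Φ{z}(λ)`. Expanding
`I^{μ;Φ}z` and exchanging the two integrals (Fubini), `Γ(μ) L_Φ{I^{μ;Φ}z}(λ)` becomes
`∫_a^∞ w(ρ) ∫_ρ^∞ (Φ ℓ - Φ ρ)^{μ-1} e^{-λ(Φ ℓ - Φ ρ)} Φ'(ℓ) dℓ dρ`, and the substitution
`u = Φ ℓ - Φ ρ` turns the inner integral into Euler's integral `Γ(μ)/λ^μ`. The exchange is
justified because the kernel is nonnegative with constant mass and `w` is integrable, by the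
exponential order of `z` and `λ > c`.
-/

open Real MeasureTheory Set Filter

theorem integral_integral_mul_kernel_eq {α β : Type*} [MeasurableSpace α] [MeasurableSpace β]
    {ν : Measure α} {μ : Measure β} [SFinite ν] [SFinite μ] {w : α → ℝ} {K : α → β → ℝ} {C : ℝ}
    (hw : Integrable w ν) (hK : AEStronglyMeasurable (Function.uncurry K) (ν.prod μ))
    (hK_nonneg : ∀ᵐ x ∂ν, 0 ≤ᵐ[μ] K x) (hK_int : ∀ᵐ x ∂ν, Integrable (K x) μ)
    (hK_mass : ∀ᵐ x ∂ν, ∫ y, K x y ∂μ = C) :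
    ∫ y, ∫ x, w x * K x y ∂ν ∂μ = C * ∫ x, w x ∂ν := by
  have hnorm : ∀ᵐ x ∂ν, ∫ y, ‖w x * K x y‖ ∂μ = C * ‖w x‖ := by
    filter_upwards [hK_nonneg, hK_mass] with x hx hxC
    rw [← hxC, ← integral_mul_const]
    refine integral_congr_ae ?_
    filter_upwards [hx] with y hy
    rw [norm_mul, Real.norm_of_nonneg hy, mul_comm]
  have hprod : Integrable (Function.uncurry fun x y => w x * K x y) (ν.prod μ) := by
    refine (integrable_prod_iff (hw.aestronglyMeasurable.comp_fst.mul hK)).2 ⟨?_, ?_⟩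
    · filter_upwards [hK_int] with x hx using hx.const_mul (w x)
    · exact (hw.norm.const_mul C).congr (hnorm.mono fun x hx => hx.symm)
  rw [← integral_integral_swap hprod, ← integral_const_mul]
  refine integral_congr_ae ?_
  filter_upwards [hK_mass] with x hx
  rw [integral_const_mul, hx, mul_comm]

noncomputable def rlLaplaceKernel (Φ Φ' : ℝ → ℝ) (μ lam ρ ℓ : ℝ) : ℝ :=
  (Ioi ρ).indicator (fun ℓ => (Φ ℓ - Φ ρ) ^ (μ - 1) * exp (-(lam * (Φ ℓ - Φ ρ))) * Φ' ℓ) ℓ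

theorem setIntegral_mul_rlLaplaceKernel {a ℓ : ℝ} (hℓ : a ≤ ℓ) (Φ Φ' z : ℝ → ℝ) (μ lam : ℝ) :
    ∫ ρ in Ioi a, exp (-lam * (Φ ρ - Φ a)) * z ρ * Φ' ρ * rlLaplaceKernel Φ Φ' μ lam ρ ℓ
      = exp (-lam * (Φ ℓ - Φ a)) * (∫ ρ in a..ℓ, Φ' ρ * (Φ ℓ - Φ ρ) ^ (μ - 1) * z ρ) * Φ' ℓ := by
  have hprod : ∀ ρ, exp (-lam * (Φ ρ - Φ a)) * z ρ * Φ' ρ * rlLaplaceKernel Φ Φ' μ lam ρ ℓ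
      = (Iio ℓ).indicator (fun ρ => exp (-lam * (Φ ℓ - Φ a)) * Φ' ℓ *
          (Φ' ρ * (Φ ℓ - Φ ρ) ^ (μ - 1) * z ρ)) ρ := by
    intro ρ
    by_cases hρ : ρ < ℓ
    · rw [rlLaplaceKernel, indicator_of_mem (show ℓ ∈ Ioi ρ from hρ),
        indicator_of_mem (show ρ ∈ Iio ℓ from hρ),
        show -lam * (Φ ℓ - Φ a) = -lam * (Φ ρ - Φ a) + -(lam * (Φ ℓ - Φ ρ)) by ring, exp_add]
      ring
    · rw [rlLaplaceKernel, indicator_of_notMem (show ℓ ∉ Ioi ρ from hρ),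
        indicator_of_notMem (show ρ ∉ Iio ℓ from hρ), mul_zero]
  simp_rw [hprod]
  rw [setIntegral_indicator measurableSet_Iio, Ioi_inter_Iio, integral_const_mul,
    intervalIntegral.integral_of_le hℓ, integral_Ioc_eq_integral_Ioo]
  ring

structure IsScaleFunction (a : ℝ) (Φ Φ' : ℝ → ℝ) : Prop where
  hasDerivAt : ∀ x ∈ Ici a, HasDerivAt Φ (Φ' x) x
  deriv_pos : ∀ x ∈ Ici a, 0 < Φ' x
  tendsto_atTop : Tendsto Φ atTop atTop

namespace IsScaleFunction

variable {a : ℝ} {Φ Φ' : ℝ → ℝ}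

theorem mono (hΦ : IsScaleFunction a Φ Φ') {ρ : ℝ} (hρ : a ≤ ρ) : IsScaleFunction ρ Φ Φ' :=
  ⟨fun x hx => hΦ.hasDerivAt x (hρ.trans hx), fun x hx => hΦ.deriv_pos x (hρ.trans hx),
    hΦ.tendsto_atTop⟩

theorem continuousOn (hΦ : IsScaleFunction a Φ Φ') : ContinuousOn Φ (Ici a) :=
  fun x hx => (hΦ.hasDerivAt x hx).continuousAt.continuousWithinAt

theorem strictMonoOn (hΦ : IsScaleFunction a Φ Φ') : StrictMonoOn Φ (Ici a) :=
  strictMonoOn_of_hasDerivWithinAt_pos (convex_Ici a) hΦ.continuousOn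
    (fun x hx => (hΦ.hasDerivAt x (interior_subset hx)).hasDerivWithinAt)
    (fun x hx => hΦ.deriv_pos x (interior_subset hx))

theorem strictMonoOn_sub (hΦ : IsScaleFunction a Φ Φ') :
    StrictMonoOn (fun ℓ => Φ ℓ - Φ a) (Ici a) :=
  fun _ hx _ hy hxy => sub_lt_sub_right (hΦ.strictMonoOn hx hy hxy) (Φ a)

theorem image_sub_Ioi (hΦ : IsScaleFunction a Φ Φ') :
    (fun ℓ => Φ ℓ - Φ a) '' Ioi a = Ioi 0 := by
  simpa using (hΦ.continuousOn.sub continuousOn_const).image_Ioi_of_strictMonoOn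
    hΦ.strictMonoOn_sub (tendsto_atTop_add_const_right _ _ hΦ.tendsto_atTop)

theorem hasDerivWithinAt_sub (hΦ : IsScaleFunction a Φ Φ') {x : ℝ} (hx : x ∈ Ioi a) :
    HasDerivWithinAt (fun ℓ => Φ ℓ - Φ a) (Φ' x) (Ioi a) x :=
  ((hΦ.hasDerivAt x (mem_Ici_of_Ioi hx)).sub_const _).hasDerivWithinAt

theorem integrableOn_comp_sub_mul_iff (hΦ : IsScaleFunction a Φ Φ') (g : ℝ → ℝ) :
    IntegrableOn (fun ℓ => g (Φ ℓ - Φ a) * Φ' ℓ) (Ioi a) ↔ IntegrableOn g (Ioi 0) := by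
  rw [← hΦ.image_sub_Ioi, integrableOn_image_iff_integrableOn_deriv_smul_of_monotoneOn
    measurableSet_Ioi (fun x hx => hΦ.hasDerivWithinAt_sub hx)
    (hΦ.strictMonoOn_sub.monotoneOn.mono Ioi_subset_Ici_self)]
  simp only [smul_eq_mul, mul_comm]

theorem integral_comp_sub_mul (hΦ : IsScaleFunction a Φ Φ') (g : ℝ → ℝ) :
    ∫ ℓ in Ioi a, g (Φ ℓ - Φ a) * Φ' ℓ = ∫ u in Ioi 0, g u := by
  rw [← hΦ.image_sub_Ioi, integral_image_eq_integral_deriv_smul_of_monotoneOn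
    measurableSet_Ioi (fun x hx => hΦ.hasDerivWithinAt_sub hx)
    (hΦ.strictMonoOn_sub.monotoneOn.mono Ioi_subset_Ici_self)]
  simp only [smul_eq_mul, mul_comm]

theorem aestronglyMeasurable_deriv (hΦ : IsScaleFunction a Φ Φ') :
    AEStronglyMeasurable Φ' (volume.restrict (Ioi a)) :=
  (measurable_deriv Φ).aestronglyMeasurable.congr <| ae_restrict_of_forall_mem measurableSet_Ioi
    fun x hx => (hΦ.hasDerivAt x (mem_Ici_of_Ioi hx)).deriv

theorem aestronglyMeasurable (hΦ : IsScaleFunction a Φ Φ') :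
    AEStronglyMeasurable Φ (volume.restrict (Ioi a)) :=
  (hΦ.continuousOn.mono Ioi_subset_Ici_self).aestronglyMeasurable measurableSet_Ioi

theorem integrableOn_rpow_mul_exp_neg_mul_sub (hΦ : IsScaleFunction a Φ Φ') {μ lam : ℝ} (hμ : 0 < μ)
    (hlam : 0 < lam) :
    IntegrableOn (fun ℓ => (Φ ℓ - Φ a) ^ (μ - 1) * exp (-(lam * (Φ ℓ - Φ a))) * Φ' ℓ) (Ioi a) :=
  (hΦ.integrableOn_comp_sub_mul_iff fun u => u ^ (μ - 1) * exp (-(lam * u))).2 <| by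
    simpa using integrableOn_rpow_mul_exp_neg_mul_rpow (p := 1) (by linarith) one_pos hlam

theorem integral_rpow_mul_exp_neg_mul_sub (hΦ : IsScaleFunction a Φ Φ') {μ lam : ℝ} (hμ : 0 < μ)
    (hlam : 0 < lam) :
    ∫ ℓ in Ioi a, (Φ ℓ - Φ a) ^ (μ - 1) * exp (-(lam * (Φ ℓ - Φ a))) * Φ' ℓ
      = Gamma μ / lam ^ μ := by
  rw [hΦ.integral_comp_sub_mul fun u => u ^ (μ - 1) * exp (-(lam * u)),
    integral_rpow_mul_exp_neg_mul_Ioi hμ hlam, one_div, inv_rpow hlam.le, div_eq_inv_mul]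

theorem integrableOn_laplace_of_expOrder (hΦ : IsScaleFunction a Φ Φ') {z : ℝ → ℝ}
    (hz : ContinuousOn z (Ici a)) {M c lam : ℝ}
    (hbound : ∀ ℓ ∈ Ici a, |z ℓ| ≤ M * exp (c * (Φ ℓ - Φ a))) (hlam : c < lam) :
    IntegrableOn (fun ℓ => exp (-lam * (Φ ℓ - Φ a)) * z ℓ * Φ' ℓ) (Ioi a) := by
  have hdom : IntegrableOn (fun ℓ => M * exp ((c - lam) * (Φ ℓ - Φ a)) * Φ' ℓ) (Ioi a) :=
    (hΦ.integrableOn_comp_sub_mul_iff fun u => M * exp ((c - lam) * u)).2 <|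
      (integrableOn_exp_mul_Ioi (by linarith) 0).const_mul M
  refine hdom.mono' ?_ (ae_restrict_of_forall_mem measurableSet_Ioi fun ℓ hℓ => ?_)
  · have hexp : ContinuousOn (fun ℓ => exp (-lam * (Φ ℓ - Φ a))) (Ioi a) := by
      have := hΦ.continuousOn.mono Ioi_subset_Ici_self
      fun_prop
    exact ((hexp.mul (hz.mono Ioi_subset_Ici_self)).aestronglyMeasurable measurableSet_Ioi).mul
      hΦ.aestronglyMeasurable_deriv
  · have hΦ'ℓ := hΦ.deriv_pos ℓ (mem_Ici_of_Ioi hℓ)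
    calc ‖exp (-lam * (Φ ℓ - Φ a)) * z ℓ * Φ' ℓ‖ = exp (-lam * (Φ ℓ - Φ a)) * |z ℓ| * Φ' ℓ := by
          rw [Real.norm_eq_abs, abs_mul, abs_mul, abs_exp, abs_of_pos hΦ'ℓ]
      _ ≤ exp (-lam * (Φ ℓ - Φ a)) * (M * exp (c * (Φ ℓ - Φ a))) * Φ' ℓ := by
          gcongr; exact hbound ℓ (mem_Ici_of_Ioi hℓ)
      _ = M * exp ((c - lam) * (Φ ℓ - Φ a)) * Φ' ℓ := by
          rw [show (c - lam) * (Φ ℓ - Φ a) = -lam * (Φ ℓ - Φ a) + c * (Φ ℓ - Φ a) by ring,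
            exp_add]
          ring

theorem rlLaplaceKernel_nonneg (hΦ : IsScaleFunction a Φ Φ') {ρ : ℝ} (hρ : a ≤ ρ) (μ lam ℓ : ℝ) :
    0 ≤ rlLaplaceKernel Φ Φ' μ lam ρ ℓ :=
  indicator_nonneg (fun ℓ (hℓ : ρ < ℓ) =>
    have hΦℓ := hΦ.strictMonoOn (mem_Ici.2 hρ) (mem_Ici.2 (hρ.trans hℓ.le)) hℓ
    mul_nonneg (mul_nonneg (rpow_nonneg (by linarith) _) (exp_pos _).le)
      (hΦ.deriv_pos ℓ (mem_Ici.2 (hρ.trans hℓ.le))).le) ℓ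

theorem integrableOn_rlLaplaceKernel (hΦ : IsScaleFunction a Φ Φ') {ρ : ℝ} (hρ : a ≤ ρ)
    {μ lam : ℝ} (hμ : 0 < μ) (hlam : 0 < lam) :
    IntegrableOn (rlLaplaceKernel Φ Φ' μ lam ρ) (Ioi a) :=
  (((hΦ.mono hρ).integrableOn_rpow_mul_exp_neg_mul_sub hμ hlam).integrable_indicator
    measurableSet_Ioi).integrableOn

theorem setIntegral_rlLaplaceKernel (hΦ : IsScaleFunction a Φ Φ') {ρ : ℝ} (hρ : a ≤ ρ)
    {μ lam : ℝ} (hμ : 0 < μ) (hlam : 0 < lam) :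
    ∫ ℓ in Ioi a, rlLaplaceKernel Φ Φ' μ lam ρ ℓ = Gamma μ / lam ^ μ := by
  unfold rlLaplaceKernel
  rw [setIntegral_indicator measurableSet_Ioi, Ioi_inter_Ioi,
    sup_eq_right.2 hρ, (hΦ.mono hρ).integral_rpow_mul_exp_neg_mul_sub hμ hlam]

theorem aestronglyMeasurable_uncurry_rlLaplaceKernel (hΦ : IsScaleFunction a Φ Φ') (μ lam : ℝ) :
    AEStronglyMeasurable (Function.uncurry (rlLaplaceKernel Φ Φ' μ lam))
      ((volume.restrict (Ioi a)).prod (volume.restrict (Ioi a))) := by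
  have hK : Function.uncurry (rlLaplaceKernel Φ Φ' μ lam) = {p : ℝ × ℝ | p.1 < p.2}.indicator
      fun p => (Φ p.2 - Φ p.1) ^ (μ - 1) * exp (-(lam * (Φ p.2 - Φ p.1))) * Φ' p.2 := rfl
  have h₁ := hΦ.aestronglyMeasurable.aemeasurable.comp_fst (ν := volume.restrict (Ioi a))
  have h₂ := hΦ.aestronglyMeasurable.aemeasurable.comp_snd (μ := volume.restrict (Ioi a))
  have h₃ := hΦ.aestronglyMeasurable_deriv.aemeasurable.comp_snd (μ := volume.restrict (Ioi a))
  rw [hK]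
  refine AEStronglyMeasurable.indicator ?_ (measurableSet_lt measurable_fst measurable_snd)
  exact (((h₂.sub h₁).pow_const _).mul (((h₂.sub h₁).const_mul lam).neg.exp)).mul h₃
    |>.aestronglyMeasurable

end IsScaleFunction

theorem generalized_laplace_of_rl_integral_general
    (a : ℝ) (Φ Φ' : ℝ → ℝ)
    (hΦd : ∀ x ∈ Ici a, HasDerivAt Φ (Φ' x) x)
    (hΦ'pos : ∀ x ∈ Ici a, 0 < Φ' x)
    (hΦtop : Tendsto Φ atTop atTop)
    (μ : ℝ) (hμ : 0 < μ)
    (z : ℝ → ℝ) (hz : ContinuousOn z (Ici a))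
    (M c : ℝ)
    (hbound : ∀ ℓ ∈ Ici a, |z ℓ| ≤ M * Real.exp (c * (Φ ℓ - Φ a)))
    (lam : ℝ) (hlam : max c 0 < lam) :
    (∫ ℓ in Ioi a,
        Real.exp (-lam * (Φ ℓ - Φ a)) *
          ((1 / Real.Gamma μ) * ∫ ρ in a..ℓ, Φ' ρ * (Φ ℓ - Φ ρ) ^ (μ - 1) * z ρ) *
          Φ' ℓ)
      = (∫ ℓ in Ioi a, Real.exp (-lam * (Φ ℓ - Φ a)) * z ℓ * Φ' ℓ) / lam ^ μ := by
  have hΦ : IsScaleFunction a Φ Φ' := ⟨hΦd, hΦ'pos, hΦtop⟩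
  have hlam₀ : 0 < lam := (le_max_right c 0).trans_lt hlam
  have hae {p : ℝ → Prop} (h : ∀ ρ, a ≤ ρ → p ρ) : ∀ᵐ ρ ∂volume.restrict (Ioi a), p ρ :=
    ae_restrict_of_forall_mem measurableSet_Ioi fun ρ hρ => h ρ (le_of_lt hρ)
  calc _ = ∫ ℓ in Ioi a, 1 / Gamma μ * ∫ ρ in Ioi a,
          exp (-lam * (Φ ρ - Φ a)) * z ρ * Φ' ρ * rlLaplaceKernel Φ Φ' μ lam ρ ℓ :=
        setIntegral_congr_fun measurableSet_Ioi fun ℓ hℓ => by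
          rw [setIntegral_mul_rlLaplaceKernel (le_of_lt hℓ)]; ring
    _ = 1 / Gamma μ * (Gamma μ / lam ^ μ *
          ∫ ρ in Ioi a, exp (-lam * (Φ ρ - Φ a)) * z ρ * Φ' ρ) := by
        rw [integral_const_mul, integral_integral_mul_kernel_eq
          (hΦ.integrableOn_laplace_of_expOrder hz hbound ((le_max_left c 0).trans_lt hlam))
          (hΦ.aestronglyMeasurable_uncurry_rlLaplaceKernel μ lam)
          (hae fun ρ hρ => ae_of_all _ (hΦ.rlLaplaceKernel_nonneg hρ μ lam))
          (hae fun ρ hρ => hΦ.integrableOn_rlLaplaceKernel hρ hμ hlam₀)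
          (hae fun ρ hρ => hΦ.setIntegral_rlLaplaceKernel hρ hμ hlam₀)]
    _ = _ := by field_simp [(Gamma_pos_of_pos hμ).ne']

/-- For `μ > 0` and `z` continuous of Φ-exponential order, the
generalized Laplace transform of the Φ-Riemann–Liouville fractional integral
`I^{μ;Φ}z` satisfies `L_Φ{I^{μ;Φ}z}(λ) = L_Φ{z}(λ)/λ^μ` for every `λ > max(c,0)`. -/
theorem generalized_laplace_of_rl_integral
    (a : ℝ) (Φ Φ' : ℝ → ℝ)
    (hΦd : ∀ x ∈ Ici a, HasDerivAt Φ (Φ' x) x)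
    (hΦ'c : ContinuousOn Φ' (Ici a))
    (hΦ'pos : ∀ x ∈ Ici a, 0 < Φ' x)
    (hΦtop : Tendsto Φ atTop atTop)
    (μ : ℝ) (hμ : 0 < μ)
    (z : ℝ → ℝ) (hz : ContinuousOn z (Ici a))
    (M c : ℝ) (hM : 0 ≤ M)
    (hbound : ∀ ℓ ∈ Ici a, |z ℓ| ≤ M * Real.exp (c * (Φ ℓ - Φ a)))
    (lam : ℝ) (hlam : max c 0 < lam) :
    (∫ ℓ in Ioi a,
        Real.exp (-lam * (Φ ℓ - Φ a)) *
          ((1 / Real.Gamma μ) * ∫ ρ in a..ℓ, Φ' ρ * (Φ ℓ - Φ ρ) ^ (μ - 1) * z ρ) *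
          Φ' ℓ)
      = (∫ ℓ in Ioi a, Real.exp (-lam * (Φ ℓ - Φ a)) * z ℓ * Φ' ℓ) / lam ^ μ :=
  generalized_laplace_of_rl_integral_general a Φ Φ' hΦd hΦ'pos hΦtop μ hμ z hz M c hbound lam hlam
end

section
/- Comparison principle: Let 0 < κ < μ < 1 and ω > 0. If γ : [a,b] → ℝ is continuously differentiable, γ(a) ≥ 0, and ᶜD^{μ;Φ}γ(ℓ) + ω ᶜD^{κ;Φ}γ(ℓ) ≥ 0 for all ℓ ∈ (a,b], then γ(ℓ) ≥ 0 for all ℓ ∈ [a,b]. -/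
/-!
Suppose `γ` is negative somewhere and let `ℓ` be a point where `γ` attains its minimum on
`[a, b]`; then `ℓ > a` and `γ ℓ < γ a`. Integrating by parts against the weight
`w ρ = (Φ ℓ - Φ ρ) ^ (-ν)`, which is increasing and blows up at `ℓ` only like `(ℓ - ρ) ^ (-ν)`,
while `γ ρ - γ ℓ ≥ 0` vanishes to first order at `ℓ`, gives
`∫ ρ in a..ℓ, w ρ * γ' ρ ≤ -w a * (γ a - γ ℓ) < 0`.
Taking `ν = μ` and `ν = κ`, both fractional derivatives are negative at `ℓ`, which
contradicts the hypothesis.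
-/

open Real MeasureTheory Set Filter Topology

lemma exists_pos_mul_sub_le_sub_of_deriv_pos {a b : ℝ} {f f' : ℝ → ℝ}
    (hf : ∀ x ∈ Icc a b, HasDerivAt f (f' x) x) (hf'c : ContinuousOn f' (Icc a b))
    (hf'pos : ∀ x ∈ Icc a b, 0 < f' x) :
    ∃ c > 0, ∀ x ∈ Icc a b, ∀ y ∈ Icc a b, x ≤ y → c * (y - x) ≤ f y - f x := by
  rcases (Icc a b).eq_empty_or_nonempty with h | hne
  · exact ⟨1, one_pos, by simp [h]⟩
  obtain ⟨x₀, hx₀, hmin⟩ := isCompact_Icc.exists_isMinOn hne hf'c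
  refine ⟨f' x₀, hf'pos x₀ hx₀, (convex_Icc a b).mul_sub_le_image_sub_of_le_deriv
    (fun x hx => (hf x hx).continuousAt.continuousWithinAt) (fun x hx => ?_) (fun x hx => ?_)⟩
  all_goals rw [interior_Icc] at hx; have hx' := Ioo_subset_Icc_self hx
  · exact (hf x hx').differentiableAt.differentiableWithinAt
  · rw [(hf x hx').deriv]
    exact hmin hx'

lemma exists_sub_le_mul_sub_of_hasDerivAt {a b : ℝ} {f f' : ℝ → ℝ}
    (hf : ∀ x ∈ Icc a b, HasDerivAt f (f' x) x) (hf'c : ContinuousOn f' (Icc a b)) :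
    ∃ M, ∀ x ∈ Icc a b, f x - f b ≤ M * (b - x) := by
  obtain ⟨M, hM⟩ := isCompact_Icc.exists_bound_of_continuousOn hf'c
  refine ⟨M, fun x hx => ?_⟩
  have hb : b ∈ Icc a b := right_mem_Icc.2 (hx.1.trans hx.2)
  have := (convex_Icc a b).norm_image_sub_le_of_norm_hasDerivWithin_le
    (fun y hy => (hf y hy).hasDerivWithinAt) hM hx hb
  rw [norm_sub_rev, Real.norm_eq_abs, Real.norm_eq_abs, abs_of_nonneg (sub_nonneg.2 hx.2)] at this
  exact (le_abs_self _).trans this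

lemma rpow_neg_le_of_mul_le {c x y ν : ℝ} (hc : 0 < c) (hx : 0 < x) (hν : 0 ≤ ν)
    (h : c * x ≤ y) : y ^ (-ν) ≤ c ^ (-ν) * x ^ (-ν) := by
  rw [← mul_rpow hc.le hx.le]
  exact rpow_le_rpow_of_nonpos (mul_pos hc hx) h (neg_nonpos.2 hν)

lemma intervalIntegrable_of_norm_le_mul_sub_rpow {f : ℝ → ℝ} {a b C ν : ℝ} (hab : a ≤ b)
    (hν : ν < 1) (hf : ContinuousOn f (Ioo a b))
    (hbound : ∀ x ∈ Ioo a b, ‖f x‖ ≤ C * (b - x) ^ (-ν)) :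
    IntervalIntegrable f volume a b := by
  have hg : IntervalIntegrable (fun x => C * (b - x) ^ (-ν)) volume a b := by
    have := (intervalIntegral.intervalIntegrable_rpow' (a := 0) (b := b - a)
      (show -1 < -ν by linarith)).comp_sub_left b
    simpa using this.symm.const_mul C
  rw [intervalIntegrable_iff_integrableOn_Ioo_of_le hab] at hg ⊢
  exact hg.mono' (hf.aestronglyMeasurable measurableSet_Ioo)
    ((ae_restrict_mem measurableSet_Ioo).mono hbound)

lemma intervalIntegrable_mul_of_le_rpow_neg {w g : ℝ → ℝ} {a b C ν : ℝ} (hab : a ≤ b)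
    (hν : ν < 1) (hwc : ContinuousOn w (Ico a b)) (hw_nonneg : ∀ x ∈ Ico a b, 0 ≤ w x)
    (hw_le : ∀ x ∈ Ico a b, w x ≤ C * (b - x) ^ (-ν)) (hgc : ContinuousOn g (Icc a b)) :
    IntervalIntegrable (fun x => w x * g x) volume a b := by
  obtain ⟨M, hM⟩ := isCompact_Icc.exists_bound_of_continuousOn hgc
  refine intervalIntegrable_of_norm_le_mul_sub_rpow (C := M * C) hab hν
    ((hwc.mul (hgc.mono Ico_subset_Icc_self)).mono Ioo_subset_Ico_self) fun x hx => ?_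
  have hx' := Ioo_subset_Ico_self hx
  rw [norm_mul, Real.norm_of_nonneg (hw_nonneg x hx')]
  calc w x * ‖g x‖ ≤ C * (b - x) ^ (-ν) * M :=
        mul_le_mul (hw_le x hx') (hM x (Ico_subset_Icc_self hx')) (norm_nonneg _)
          ((hw_nonneg x hx').trans (hw_le x hx'))
    _ = M * C * (b - x) ^ (-ν) := by ring

lemma tendsto_mul_nhdsLT_zero_of_le {ℓ C M ν : ℝ} (hν : ν < 1) {w G : ℝ → ℝ}
    (hw : ∀ᶠ t in 𝓝[<] ℓ, 0 ≤ w t ∧ w t ≤ C * (ℓ - t) ^ (-ν))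
    (hG : ∀ᶠ t in 𝓝[<] ℓ, 0 ≤ G t ∧ G t ≤ M * (ℓ - t)) :
    Tendsto (fun t => w t * G t) (𝓝[<] ℓ) (𝓝 0) := by
  have hpow : Tendsto (fun t => C * M * (ℓ - t) ^ (1 - ν)) (𝓝[<] ℓ) (𝓝 0) := by
    have : Continuous fun t => C * M * (ℓ - t) ^ (1 - ν) :=
      continuous_const.mul
        ((continuous_const.sub continuous_id).rpow_const fun _ => Or.inr (by linarith))
    exact (this.tendsto' ℓ 0 (by simp [zero_rpow (by linarith : 1 - ν ≠ 0)])).mono_left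
      nhdsWithin_le_nhds
  refine squeeze_zero' ?_ ?_ hpow <;>
    filter_upwards [hw, hG, self_mem_nhdsWithin] with t ⟨hw0, hwC⟩ ⟨hG0, hGM⟩ (ht : t < ℓ)
  · exact mul_nonneg hw0 hG0
  · calc w t * G t ≤ C * (ℓ - t) ^ (-ν) * (M * (ℓ - t)) :=
          mul_le_mul hwC hGM hG0 (hw0.trans hwC)
      _ = C * M * (ℓ - t) ^ (1 - ν) := by
        rw [show 1 - ν = -ν + 1 by ring, rpow_add_one (sub_pos.2 ht).ne']
        ring

lemma integral_mul_deriv_le_of_tendsto {a ℓ : ℝ} (haℓ : a < ℓ) {w w' G g : ℝ → ℝ}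
    (hw : ∀ x ∈ Ico a ℓ, HasDerivAt w (w' x) x) (hw'c : ContinuousOn w' (Ico a ℓ))
    (hw'_nonneg : ∀ x ∈ Ico a ℓ, 0 ≤ w' x)
    (hG : ∀ x ∈ Ico a ℓ, HasDerivAt G (g x) x) (hgc : ContinuousOn g (Ico a ℓ))
    (hG_nonneg : ∀ x ∈ Ico a ℓ, 0 ≤ G x)
    (hint : IntervalIntegrable (fun x => w x * g x) volume a ℓ)
    (hlim : Tendsto (fun t => w t * G t) (𝓝[<] ℓ) (𝓝 0)) :
    ∫ x in a..ℓ, w x * g x ≤ -(w a * G a) := by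
  have hprim : Tendsto (fun t => ∫ x in a..t, w x * g x) (𝓝[<] ℓ)
      (𝓝 (∫ x in a..ℓ, w x * g x)) := by
    have hcont := intervalIntegral.continuousOn_primitive_interval' hint left_mem_uIcc
    rw [uIcc_of_le haℓ.le] at hcont
    rw [← nhdsWithin_Ioo_eq_nhdsLT haℓ]
    exact (hcont ℓ (right_mem_Icc.2 haℓ.le)).tendsto.mono_left
      (nhdsWithin_mono _ Ioo_subset_Icc_self)
  have hIBP : ∀ t ∈ Ioo a ℓ, ∫ x in a..t, w x * g x ≤ w t * G t - w a * G a := by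
    intro t ht
    have hsub : uIcc a t ⊆ Ico a ℓ := by
      rw [uIcc_of_le ht.1.le]
      exact Icc_subset_Ico_right ht.2
    rw [intervalIntegral.integral_mul_deriv_eq_deriv_mul (fun x hx => hw x (hsub hx))
      (fun x hx => hG x (hsub hx)) (hw'c.mono hsub).intervalIntegrable
      (hgc.mono hsub).intervalIntegrable]
    have : 0 ≤ ∫ x in a..t, w' x * G x :=
      intervalIntegral.integral_nonneg ht.1.le fun x hx =>
        have hx' := hsub (Icc_subset_uIcc hx)
        mul_nonneg (hw'_nonneg x hx') (hG_nonneg x hx')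
    linarith
  have hlim' : Tendsto (fun t => w t * G t - w a * G a) (𝓝[<] ℓ) (𝓝 (-(w a * G a))) := by
    simpa using hlim.sub_const (w a * G a)
  exact le_of_tendsto_of_tendsto hprim hlim' <| by
    filter_upwards [Ioo_mem_nhdsLT haℓ] with t ht using hIBP t ht

lemma integral_rpow_neg_mul_deriv_le_of_isMinOn {a ℓ ν : ℝ} (haℓ : a < ℓ) (hν0 : 0 ≤ ν)
    (hν1 : ν < 1) {Φ Φ' γ γ' : ℝ → ℝ} (hΦ : ∀ x ∈ Icc a ℓ, HasDerivAt Φ (Φ' x) x)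
    (hΦ'c : ContinuousOn Φ' (Icc a ℓ)) (hΦ'pos : ∀ x ∈ Icc a ℓ, 0 < Φ' x)
    (hγ : ∀ x ∈ Icc a ℓ, HasDerivAt γ (γ' x) x) (hγ'c : ContinuousOn γ' (Icc a ℓ))
    (hmin : IsMinOn γ (Icc a ℓ) ℓ) :
    ∫ ρ in a..ℓ, (Φ ℓ - Φ ρ) ^ (-ν) * γ' ρ ≤ -((Φ ℓ - Φ a) ^ (-ν) * (γ a - γ ℓ)) := by
  obtain ⟨c, hc, hΦc⟩ := exists_pos_mul_sub_le_sub_of_deriv_pos hΦ hΦ'c hΦ'pos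
  obtain ⟨L, hγL⟩ := exists_sub_le_mul_sub_of_hasDerivAt hγ hγ'c
  have hℓ : ℓ ∈ Icc a ℓ := right_mem_Icc.2 haℓ.le
  have hΦ_pos : ∀ ρ ∈ Ico a ℓ, 0 < Φ ℓ - Φ ρ := fun ρ hρ =>
    (mul_pos hc (sub_pos.2 hρ.2)).trans_le (hΦc ρ (Ico_subset_Icc_self hρ) ℓ hℓ hρ.2.le)
  have hw_le : ∀ ρ ∈ Ico a ℓ, (Φ ℓ - Φ ρ) ^ (-ν) ≤ c ^ (-ν) * (ℓ - ρ) ^ (-ν) := fun ρ hρ =>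
    rpow_neg_le_of_mul_le hc (sub_pos.2 hρ.2) hν0 (hΦc ρ (Ico_subset_Icc_self hρ) ℓ hℓ hρ.2.le)
  have hw_nonneg : ∀ ρ ∈ Ico a ℓ, 0 ≤ (Φ ℓ - Φ ρ) ^ (-ν) := fun ρ hρ =>
    rpow_nonneg (hΦ_pos ρ hρ).le _
  have hΦ_cont : ContinuousOn (fun ρ => Φ ℓ - Φ ρ) (Ico a ℓ) :=
    continuousOn_const.sub fun x hx =>
      (hΦ x (Ico_subset_Icc_self hx)).continuousAt.continuousWithinAt
  apply integral_mul_deriv_le_of_tendsto haℓ (w' := fun ρ => ν * Φ' ρ * (Φ ℓ - Φ ρ) ^ (-ν - 1))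
    (G := fun ρ => γ ρ - γ ℓ)
  · intro x hx
    convert ((hΦ x (Ico_subset_Icc_self hx)).const_sub (Φ ℓ)).rpow_const
      (p := -ν) (Or.inl (hΦ_pos x hx).ne') using 1
    ring
  · exact (continuousOn_const.mul (hΦ'c.mono Ico_subset_Icc_self)).mul
      (hΦ_cont.rpow_const fun x hx => Or.inl (hΦ_pos x hx).ne')
  · intro x hx
    have := hΦ'pos x (Ico_subset_Icc_self hx)
    have := hΦ_pos x hx
    positivity
  · exact fun x hx => (hγ x (Ico_subset_Icc_self hx)).sub_const _
  · exact hγ'c.mono Ico_subset_Icc_self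
  · exact fun x hx => sub_nonneg.2 (hmin (Ico_subset_Icc_self hx))
  · exact intervalIntegrable_mul_of_le_rpow_neg haℓ.le hν1
      (hΦ_cont.rpow_const fun x hx => Or.inl (hΦ_pos x hx).ne') hw_nonneg hw_le hγ'c
  · refine tendsto_mul_nhdsLT_zero_of_le hν1 (C := c ^ (-ν)) (M := L) ?_ ?_ <;>
      filter_upwards [Ioo_mem_nhdsLT haℓ] with t ht
    · exact ⟨hw_nonneg t (Ioo_subset_Ico_self ht), hw_le t (Ioo_subset_Ico_self ht)⟩
    · exact ⟨sub_nonneg.2 (hmin (Ioo_subset_Icc_self ht)), hγL t (Ioo_subset_Icc_self ht)⟩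

lemma one_div_gamma_mul_integral_neg_of_isMinOn {a ℓ ν : ℝ} (haℓ : a < ℓ) (hν0 : 0 ≤ ν)
    (hν1 : ν < 1) {Φ Φ' γ γ' : ℝ → ℝ} (hΦ : ∀ x ∈ Icc a ℓ, HasDerivAt Φ (Φ' x) x)
    (hΦ'c : ContinuousOn Φ' (Icc a ℓ)) (hΦ'pos : ∀ x ∈ Icc a ℓ, 0 < Φ' x)
    (hγ : ∀ x ∈ Icc a ℓ, HasDerivAt γ (γ' x) x) (hγ'c : ContinuousOn γ' (Icc a ℓ))
    (hmin : IsMinOn γ (Icc a ℓ) ℓ) (hlt : γ ℓ < γ a) :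
    1 / Gamma (1 - ν) * ∫ ρ in a..ℓ, (Φ ℓ - Φ ρ) ^ (-ν) * γ' ρ < 0 := by
  obtain ⟨c, hc, hΦc⟩ := exists_pos_mul_sub_le_sub_of_deriv_pos hΦ hΦ'c hΦ'pos
  have hΦa : 0 < Φ ℓ - Φ a := (mul_pos hc (sub_pos.2 haℓ)).trans_le
    (hΦc a (left_mem_Icc.2 haℓ.le) ℓ (right_mem_Icc.2 haℓ.le) haℓ.le)
  refine mul_neg_of_pos_of_neg (one_div_pos.2 (Gamma_pos_of_pos (by linarith))) ?_
  refine (integral_rpow_neg_mul_deriv_le_of_isMinOn haℓ hν0 hν1 hΦ hΦ'c hΦ'pos hγ hγ'c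
    hmin).trans_lt ?_
  exact neg_neg_of_pos (mul_pos (rpow_pos_of_pos hΦa _) (sub_pos.2 hlt))

/-- Comparison principle: For `0 < κ < μ < 1`, `ω > 0`, if `γ` is
continuously differentiable on `[a,b]` with `γ(a) ≥ 0` and
`ᶜD^{μ;Φ}γ(ℓ) + ω ᶜD^{κ;Φ}γ(ℓ) ≥ 0` for all `ℓ ∈ (a,b]`,
then `γ(ℓ) ≥ 0` on `[a,b]`. -/
theorem comparison_principle
    (a b : ℝ) (hab : a < b)
    (Φ Φ' : ℝ → ℝ)
    (hΦd : ∀ x ∈ Icc a b, HasDerivAt Φ (Φ' x) x)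
    (hΦ'c : ContinuousOn Φ' (Icc a b))
    (hΦ'pos : ∀ x ∈ Icc a b, 0 < Φ' x)
    (μ κ ω : ℝ) (hκ0 : 0 < κ) (hκμ : κ < μ) (hμ1 : μ < 1) (hω : 0 < ω)
    (γ γ' : ℝ → ℝ)
    (hγd : ∀ x ∈ Icc a b, HasDerivAt γ (γ' x) x)
    (hγ'c : ContinuousOn γ' (Icc a b))
    (hγa : 0 ≤ γ a)
    (hineq : ∀ ℓ ∈ Ioc a b,
      0 ≤ (1 / Real.Gamma (1 - μ)) * (∫ ρ in a..ℓ, (Φ ℓ - Φ ρ) ^ (-μ) * γ' ρ)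
        + ω * ((1 / Real.Gamma (1 - κ)) * ∫ ρ in a..ℓ, (Φ ℓ - Φ ρ) ^ (-κ) * γ' ρ)) :
    ∀ ℓ ∈ Icc a b, 0 ≤ γ ℓ := by
  by_contra! ⟨ℓ₁, hℓ₁, hγℓ₁⟩
  obtain ⟨ℓ, hℓ, hmin⟩ := isCompact_Icc.exists_isMinOn (nonempty_Icc.2 hab.le)
    fun x hx => (hγd x hx).continuousAt.continuousWithinAt
  have hlt : γ ℓ < γ a := (hmin hℓ₁).trans_lt (hγℓ₁.trans_le hγa)
  have haℓ : a < ℓ := hℓ.1.lt_of_ne (by rintro rfl; exact hlt.false)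
  have hsub : Icc a ℓ ⊆ Icc a b := Icc_subset_Icc_right hℓ.2
  have hneg : ∀ ν, 0 ≤ ν → ν < 1 →
      1 / Gamma (1 - ν) * ∫ ρ in a..ℓ, (Φ ℓ - Φ ρ) ^ (-ν) * γ' ρ < 0 := fun ν hν0 hν1 =>
    one_div_gamma_mul_integral_neg_of_isMinOn haℓ hν0 hν1 (fun x hx => hΦd x (hsub hx))
      (hΦ'c.mono hsub) (fun x hx => hΦ'pos x (hsub hx)) (fun x hx => hγd x (hsub hx))
      (hγ'c.mono hsub) (hmin.on_subset hsub) hlt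
  have hμ := hneg μ (hκ0.trans hκμ).le hμ1
  have hκ := hneg κ hκ0.le (hκμ.trans hμ1)
  linarith [hineq ℓ ⟨haℓ, hℓ.2⟩, mul_neg_of_pos_of_neg hω hκ]
end

section
/- Uniqueness: Let 0 < κ < μ < 1, ω > 0, z_a ∈ ℝ, and let F : [a,b] × ℝ → ℝ be continuous with |F(ℓ,y) − F(ℓ,x)| ≤ L|y − x| for all ℓ ∈ [a,b] and x, y ∈ ℝ, for some L > 0. If z, z̄ : [a,b] → ℝ are both continuous solutions of the integral equation z(ℓ) = z_a + ∫_a^ℓ Φ'(ρ)(Φ(ℓ)−Φ(ρ))^{μ−1} E_{μ−κ,μ}(−ω(Φ(ℓ)−Φ(ρ))^{μ−κ}) F(ρ, z(ρ)) dρ on [a,b] with the same initial value z_a, then z(ℓ) = z̄(ℓ) for all ℓ ∈ [a,b]. -/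
/-!
On `[a, b]` the kernel `Φ'(ρ) (Φ ℓ - Φ ρ)^(μ-1) E_{μ-κ,μ}(-ω (Φ ℓ - Φ ρ)^(μ-κ))` is dominated by
`C (ℓ - ρ)^(μ-1)`: `Φ'` is bounded, `Φ ℓ - Φ ρ ≥ m (ℓ - ρ)` with `m = min Φ' > 0` while `μ - 1 < 0`,
and the Mittag-Leffler factor is bounded because its argument stays in a compact set. With the
Lipschitz condition, `w = |z - z̄|` then satisfies `w ℓ ≤ B ∫_a^ℓ (ℓ - ρ)^(μ-1) w ρ dρ`. Such a
`w` vanishes: if `w = 0` on `[a, c]` and `B (d - c)^μ < μ`, the maximum `M` of `w` on `[c, d]`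
satisfies `M ≤ B (d - c)^μ / μ · M`, so `M = 0`; finitely many such steps cover `[a, b]`.
-/

open Real MeasureTheory Set

open Filter

-- log-convexity of `Γ`, compared on the slopes over `[x - 1, x]` and `[x, x + p]`
theorem Real.Gamma_mul_rpow_le_Gamma_add {x p : ℝ} (hx : 1 < x) (hp : 0 < p) :
    Gamma x * (x - 1) ^ p ≤ Gamma (x + p) := by
  have hx0 : 0 < x - 1 := by linarith
  have hΓ : 0 < Gamma (x - 1) := Gamma_pos_of_pos hx0
  have hrec : Gamma x = (x - 1) * Gamma (x - 1) := by simpa using Gamma_add_one hx0.ne'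
  have hslope := convexOn_log_Gamma.slope_mono_adjacent (y := x) (show x - 1 ∈ Ioi 0 from hx0)
    (show x + p ∈ Ioi 0 from by simp only [mem_Ioi]; linarith) (by linarith) (by linarith)
  simp only [Function.comp_apply, sub_sub_cancel, add_sub_cancel_left, div_one, hrec,
    log_mul hx0.ne' hΓ.ne', add_sub_cancel_right, le_div_iff₀ hp] at hslope
  rw [← log_le_log_iff (by positivity) (Gamma_pos_of_pos (by linarith)), log_mul (by positivity)
    (by positivity), log_rpow hx0, hrec, log_mul hx0.ne' hΓ.ne']
  linarith

theorem summable_mittagLeffler_terms {p q R : ℝ} (hp : 0 < p) (hq : 0 < q) (hR : 0 ≤ R) :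
    Summable fun k : ℕ => R ^ k / Gamma (p * k + q) := by
  have hx : Tendsto (fun k : ℕ => p * k + q - 1) atTop atTop := by
    simpa only [add_sub_assoc] using tendsto_atTop_add_const_right _ (q - 1)
      (tendsto_natCast_atTop_atTop.const_mul_atTop hp)
  refine summable_of_ratio_norm_eventually_le (r := 1 / 2) (by norm_num) ?_
  filter_upwards [hx.eventually_gt_atTop 0,
    ((tendsto_rpow_atTop hp).comp hx).eventually_ge_atTop (2 * R)] with k hk hkR
  have hΓ : 0 < Gamma (p * k + q) := Gamma_pos_of_pos (by linarith)
  have hpow : 0 < (p * k + q - 1) ^ p := rpow_pos_of_pos hk p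
  have hrec := Gamma_mul_rpow_le_Gamma_add (show 1 < p * k + q by linarith) hp
  simp only [Function.comp_apply] at hkR
  rw [Nat.cast_succ, mul_add_one, add_right_comm, norm_of_nonneg (by positivity),
    norm_of_nonneg (by positivity)]
  calc R ^ (k + 1) / Gamma (p * k + q + p)
      ≤ R ^ (k + 1) / (Gamma (p * k + q) * (p * k + q - 1) ^ p) := by gcongr
    _ = R ^ k / Gamma (p * k + q) * (R / (p * k + q - 1) ^ p) := by
        rw [pow_succ]; field_simp
    _ ≤ R ^ k / Gamma (p * k + q) * (1 / 2) := by
        gcongr _ * ?_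
        rw [div_le_iff₀ hpow]; linarith
    _ = 1 / 2 * (R ^ k / Gamma (p * k + q)) := mul_comm _ _

theorem mittagLeffler_nonneg {p q R : ℝ} (hp : 0 ≤ p) (hq : 0 < q) (hR : 0 ≤ R) :
    0 ≤ mittagLeffler p q R :=
  tsum_nonneg fun k => div_nonneg (pow_nonneg hR k) (Gamma_pos_of_pos (by positivity)).le

theorem norm_mittagLeffler_term_le {p q x R : ℝ} (hp : 0 ≤ p) (hq : 0 < q) (hx : |x| ≤ R) (k : ℕ) :
    ‖x ^ k / Gamma (p * k + q)‖ ≤ R ^ k / Gamma (p * k + q) := by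
  rw [norm_div, norm_pow, Real.norm_eq_abs, norm_of_nonneg (Gamma_pos_of_pos (by positivity)).le]
  gcongr

theorem abs_mittagLeffler_le {p q x R : ℝ} (hp : 0 < p) (hq : 0 < q) (hx : |x| ≤ R) :
    |mittagLeffler p q x| ≤ mittagLeffler p q R :=
  tsum_of_norm_bounded (summable_mittagLeffler_terms hp hq ((abs_nonneg x).trans hx)).hasSum
    (norm_mittagLeffler_term_le hp.le hq hx)

theorem continuous_mittagLeffler {p q : ℝ} (hp : 0 < p) (hq : 0 < q) :
    Continuous (mittagLeffler p q) := by
  refine continuous_iff_continuousAt.2 fun x => ?_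
  have hR : 0 ≤ |x| + 1 := by positivity
  have hon : ContinuousOn (mittagLeffler p q) (Icc (-(|x| + 1)) (|x| + 1)) :=
    continuousOn_tsum (fun k => (continuous_pow k).continuousOn.div_const _)
      (summable_mittagLeffler_terms hp hq hR)
      fun k y hy => norm_mittagLeffler_term_le hp.le hq (abs_le.2 hy) k
  exact hon.continuousAt (Icc_mem_nhds (by linarith [neg_abs_le x]) (by linarith [le_abs_self x]))

theorem intervalIntegrable_sub_rpow {μ : ℝ} (hμ : 0 < μ) (a ℓ : ℝ) :
    IntervalIntegrable (fun ρ => (ℓ - ρ) ^ (μ - 1)) volume a ℓ := by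
  simpa using ((intervalIntegral.intervalIntegrable_rpow' (a := 0) (b := ℓ - a)
    (by linarith : -1 < μ - 1)).comp_sub_left ℓ).symm

theorem integral_sub_rpow {μ : ℝ} (hμ : 0 < μ) (c ℓ : ℝ) :
    ∫ ρ in c..ℓ, (ℓ - ρ) ^ (μ - 1) = (ℓ - c) ^ μ / μ := by
  rw [intervalIntegral.integral_comp_sub_left (fun s => s ^ (μ - 1)),
    integral_rpow (Or.inl (by linarith)), sub_self, sub_add_cancel, zero_rpow hμ.ne', sub_zero]

theorem IntervalIntegrable.of_abs_le_mul_sub_rpow {k : ℝ → ℝ} {a ℓ C μ : ℝ} (haℓ : a ≤ ℓ)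
    (hμ : 0 < μ) (hk : ContinuousOn k (Ioo a ℓ))
    (hkC : ∀ ρ ∈ Ioo a ℓ, |k ρ| ≤ C * (ℓ - ρ) ^ (μ - 1)) :
    IntervalIntegrable k volume a ℓ := by
  rw [intervalIntegrable_iff_integrableOn_Ioo_of_le haℓ]
  refine Integrable.mono' ?_ (hk.aestronglyMeasurable measurableSet_Ioo)
    ((ae_restrict_iff' measurableSet_Ioo).2 (Eventually.of_forall hkC))
  exact (intervalIntegrable_iff_integrableOn_Ioo_of_le haℓ).1
    ((intervalIntegrable_sub_rpow hμ a ℓ).const_mul C)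

theorem abs_integral_mul_sub_integral_mul_le {k g₁ g₂ v : ℝ → ℝ} {a ℓ C L μ : ℝ}
    (haℓ : a ≤ ℓ) (hμ : 0 < μ) (hk : IntervalIntegrable k volume a ℓ)
    (hg₁ : ContinuousOn g₁ (Icc a ℓ)) (hg₂ : ContinuousOn g₂ (Icc a ℓ))
    (hv : ContinuousOn v (Icc a ℓ)) (hkC : ∀ ρ ∈ Ioo a ℓ, |k ρ| ≤ C * (ℓ - ρ) ^ (μ - 1))
    (hgv : ∀ ρ ∈ Ioo a ℓ, |g₁ ρ - g₂ ρ| ≤ L * v ρ) :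
    |(∫ ρ in a..ℓ, k ρ * g₁ ρ) - ∫ ρ in a..ℓ, k ρ * g₂ ρ| ≤
      C * L * ∫ ρ in a..ℓ, (ℓ - ρ) ^ (μ - 1) * v ρ := by
  rw [← uIcc_of_le haℓ] at hg₁ hg₂ hv
  have hkg := (hk.mul_continuousOn hg₁).sub (hk.mul_continuousOn hg₂)
  rw [← intervalIntegral.integral_sub (hk.mul_continuousOn hg₁) (hk.mul_continuousOn hg₂),
    ← intervalIntegral.integral_const_mul]
  refine (intervalIntegral.abs_integral_le_integral_abs haℓ).trans
    (intervalIntegral.integral_mono_on_of_le_Ioo haℓ hkg.abs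
      (((intervalIntegrable_sub_rpow hμ a ℓ).mul_continuousOn hv).const_mul _) fun ρ hρ => ?_)
  calc |k ρ * g₁ ρ - k ρ * g₂ ρ| = |k ρ| * |g₁ ρ - g₂ ρ| := by rw [← mul_sub, abs_mul]
    _ ≤ C * (ℓ - ρ) ^ (μ - 1) * (L * v ρ) :=
      mul_le_mul (hkC ρ hρ) (hgv ρ hρ) (abs_nonneg _) ((abs_nonneg _).trans (hkC ρ hρ))
    _ = C * L * ((ℓ - ρ) ^ (μ - 1) * v ρ) := by ring

section Gronwall

variable {w : ℝ → ℝ} {a b B μ : ℝ}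

theorem integral_sub_rpow_mul_le {c u : ℝ} (hμ : 0 < μ) (hcu : c ≤ u)
    (hw : ContinuousOn w (Icc c u)) (hwu : ∀ x ∈ Icc c u, w x ≤ w u) :
    ∫ ρ in c..u, (u - ρ) ^ (μ - 1) * w ρ ≤ w u * ((u - c) ^ μ / μ) := by
  rw [← uIcc_of_le hcu] at hw
  rw [← integral_sub_rpow hμ, ← intervalIntegral.integral_const_mul]
  refine intervalIntegral.integral_mono_on_of_le_Ioo hcu
    ((intervalIntegrable_sub_rpow hμ c u).mul_continuousOn hw)
    ((intervalIntegrable_sub_rpow hμ c u).const_mul _) fun ρ hρ => ?_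
  rw [mul_comm (w u)]
  exact mul_le_mul_of_nonneg_left (hwu ρ (Ioo_subset_Icc_self hρ))
    (rpow_nonneg (by linarith [hρ.2]) _)

theorem eq_zero_extend_of_le_mul_integral_sub_rpow_mul {c d : ℝ} (hμ : 0 < μ) (hB : 0 ≤ B)
    (hw : ContinuousOn w (Icc a b)) (hw0 : ∀ x ∈ Icc a b, 0 ≤ w x)
    (hle : ∀ ℓ ∈ Icc a b, w ℓ ≤ B * ∫ ρ in a..ℓ, (ℓ - ρ) ^ (μ - 1) * w ρ)
    (hc : c ∈ Icc a b) (hd : d ∈ Icc c b) (hcd : B * (d - c) ^ μ < μ)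
    (hzero : ∀ x ∈ Icc a c, w x = 0) : ∀ x ∈ Icc c d, w x = 0 := by
  have hsub : Icc c d ⊆ Icc a b := Icc_subset_Icc hc.1 hd.2
  obtain ⟨u, hu, hmax⟩ := isCompact_Icc.exists_isMaxOn (nonempty_Icc.2 hd.1) (hw.mono hsub)
  have hwu : ∀ x ∈ Icc c d, w x ≤ w u := fun x hx => hmax hx
  have hint : IntervalIntegrable (fun ρ => (u - ρ) ^ (μ - 1) * w ρ) volume a u :=
    (intervalIntegrable_sub_rpow hμ a u).mul_continuousOn (hw.mono <| by
      rw [uIcc_of_le (hc.1.trans hu.1)]; exact Icc_subset_Icc_right (hu.2.trans hd.2))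
  have hcu : c ∈ uIcc a u := mem_uIcc_of_le hc.1 hu.1
  have hsplit : ∫ ρ in a..u, (u - ρ) ^ (μ - 1) * w ρ = ∫ ρ in c..u, (u - ρ) ^ (μ - 1) * w ρ := by
    rw [← intervalIntegral.integral_add_adjacent_intervals (b := c)
      (hint.mono_set (uIcc_subset_uIcc_left hcu)) (hint.mono_set (uIcc_subset_uIcc_right hcu)),
      intervalIntegral.integral_congr (g := fun _ => 0) fun x hx => ?_,
      intervalIntegral.integral_zero, zero_add]
    rw [uIcc_of_le hc.1] at hx
    simp [hzero x hx]
  have hbound := integral_sub_rpow_mul_le hμ hu.1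
    (hw.mono ((Icc_subset_Icc_right hu.2).trans hsub)) fun x hx => hwu x ⟨hx.1, hx.2.trans hu.2⟩
  have hθ : B * (u - c) ^ μ < μ := lt_of_le_of_lt (mul_le_mul_of_nonneg_left
    (rpow_le_rpow (sub_nonneg.2 hu.1) (by linarith [hu.2]) hμ.le) hB) hcd
  have hwu0 : w u ≤ 0 := by
    have hself : w u ≤ w u * (B * (u - c) ^ μ / μ) := calc
      w u ≤ B * ∫ ρ in a..u, (u - ρ) ^ (μ - 1) * w ρ := hle u (hsub hu)
      _ ≤ B * (w u * ((u - c) ^ μ / μ)) := mul_le_mul_of_nonneg_left (hsplit ▸ hbound) hB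
      _ = w u * (B * (u - c) ^ μ / μ) := by ring
    nlinarith [(div_lt_one hμ).2 hθ]
  intro x hx
  exact le_antisymm ((hwu x hx).trans hwu0) (hw0 x (hsub hx))

theorem eq_zero_of_le_mul_integral_sub_rpow_mul (hμ : 0 < μ) (hB : 0 ≤ B)
    (hw : ContinuousOn w (Icc a b)) (hw0 : ∀ x ∈ Icc a b, 0 ≤ w x)
    (hle : ∀ ℓ ∈ Icc a b, w ℓ ≤ B * ∫ ρ in a..ℓ, (ℓ - ρ) ^ (μ - 1) * w ρ) :
    ∀ ℓ ∈ Icc a b, w ℓ = 0 := by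
  set h := (μ / (B + 1)) ^ μ⁻¹
  have hh : 0 < h := rpow_pos_of_pos (by positivity) _
  have hBh : B * h ^ μ < μ := by
    rw [rpow_inv_rpow (by positivity) hμ.ne', mul_div_assoc', div_lt_iff₀ (by positivity)]
    nlinarith
  have hstep : ∀ n : ℕ, ∀ x ∈ Icc a b, x ≤ a + n * h → w x = 0 := by
    intro n
    induction n with
    | zero =>
      intro x hx hxa
      obtain rfl : x = a := le_antisymm (by simpa using hxa) hx.1
      exact le_antisymm (by simpa using hle x hx) (hw0 x hx)
    | succ n ih =>
      intro x hx hxn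
      push_cast at hxn
      set c := max a (x - h)
      have hcx : c ≤ x := max_le hx.1 (by linarith)
      have hc : c ∈ Icc a b := ⟨le_max_left _ _, hcx.trans hx.2⟩
      have hxc : x - c ≤ h := by linarith [le_max_right a (x - h)]
      have hcn : c ≤ a + n * h := max_le (by nlinarith) (by linarith)
      exact eq_zero_extend_of_le_mul_integral_sub_rpow_mul hμ hB hw hw0 hle hc ⟨hcx, hx.2⟩
        ((mul_le_mul_of_nonneg_left (rpow_le_rpow (sub_nonneg.2 hcx) hxc hμ.le) hB).trans_lt hBh)
        (fun y hy => ih y ⟨hy.1, hy.2.trans hc.2⟩ (hy.2.trans hcn)) x ⟨hcx, le_rfl⟩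
  intro ℓ hℓ
  obtain ⟨n, hn⟩ := exists_nat_ge ((ℓ - a) / h)
  exact hstep n ℓ hℓ (by rw [div_le_iff₀ hh] at hn; linarith)

end Gronwall

noncomputable def mittagLefflerKernel (Φ Φ' : ℝ → ℝ) (μ κ ω ℓ ρ : ℝ) : ℝ :=
  Φ' ρ * (Φ ℓ - Φ ρ) ^ (μ - 1) * mittagLeffler (μ - κ) μ (-ω * (Φ ℓ - Φ ρ) ^ (μ - κ))

section Kernel

variable {Φ Φ' : ℝ → ℝ} {a b μ κ ω : ℝ}

theorem exists_pos_mul_sub_le_sub (hΦd : ∀ x ∈ Icc a b, HasDerivAt Φ (Φ' x) x)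
    (hΦ'c : ContinuousOn Φ' (Icc a b)) (hΦ'pos : ∀ x ∈ Icc a b, 0 < Φ' x) :
    ∃ m > 0, ∀ ρ ∈ Icc a b, ∀ ℓ ∈ Icc a b, ρ ≤ ℓ → m * (ℓ - ρ) ≤ Φ ℓ - Φ ρ := by
  obtain ⟨m, hm, hmΦ'⟩ := isCompact_Icc.exists_forall_le' hΦ'c hΦ'pos
  refine ⟨m, hm, (convex_Icc a b).mul_sub_le_image_sub_of_le_deriv
    (fun x hx => (hΦd x hx).continuousAt.continuousWithinAt)
    (fun x hx => (hΦd x (interior_subset hx)).differentiableAt.differentiableWithinAt)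
    fun x hx => ?_⟩
  rw [(hΦd x (interior_subset hx)).deriv]
  exact hmΦ' x (interior_subset hx)

theorem abs_mittagLefflerKernel_le {ℓ ρ m M T : ℝ} (hκμ : κ < μ) (hμ : 0 < μ) (hμ1 : μ ≤ 1)
    (hm : 0 < m) (hρℓ : ρ < ℓ) (hΦ' : |Φ' ρ| ≤ M) (hlow : m * (ℓ - ρ) ≤ Φ ℓ - Φ ρ)
    (hup : Φ ℓ - Φ ρ ≤ T) :
    |mittagLefflerKernel Φ Φ' μ κ ω ℓ ρ| ≤
      M * m ^ (μ - 1) * mittagLeffler (μ - κ) μ (|ω| * T ^ (μ - κ)) * (ℓ - ρ) ^ (μ - 1) := by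
  have hs : 0 < m * (ℓ - ρ) := mul_pos hm (sub_pos.2 hρℓ)
  have hΦs : 0 < Φ ℓ - Φ ρ := hs.trans_le hlow
  have hpow : (Φ ℓ - Φ ρ) ^ (μ - 1) ≤ m ^ (μ - 1) * (ℓ - ρ) ^ (μ - 1) := by
    rw [← mul_rpow hm.le (sub_nonneg.2 hρℓ.le)]
    exact rpow_le_rpow_of_nonpos hs hlow (by linarith)
  have hE : |mittagLeffler (μ - κ) μ (-ω * (Φ ℓ - Φ ρ) ^ (μ - κ))| ≤
      mittagLeffler (μ - κ) μ (|ω| * T ^ (μ - κ)) := by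
    refine abs_mittagLeffler_le (sub_pos.2 hκμ) hμ ?_
    rw [abs_mul, abs_neg, abs_of_pos (rpow_pos_of_pos hΦs _)]
    gcongr
  rw [mittagLefflerKernel, abs_mul, abs_mul, abs_of_pos (rpow_pos_of_pos hΦs _)]
  calc |Φ' ρ| * (Φ ℓ - Φ ρ) ^ (μ - 1) * |mittagLeffler (μ - κ) μ (-ω * (Φ ℓ - Φ ρ) ^ (μ - κ))|
      ≤ M * (m ^ (μ - 1) * (ℓ - ρ) ^ (μ - 1)) * mittagLeffler (μ - κ) μ (|ω| * T ^ (μ - κ)) := by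
        have hM : 0 ≤ M := (abs_nonneg _).trans hΦ'
        gcongr
    _ = _ := by ring

theorem exists_abs_mittagLefflerKernel_le (hΦd : ∀ x ∈ Icc a b, HasDerivAt Φ (Φ' x) x)
    (hΦ'c : ContinuousOn Φ' (Icc a b)) (hΦ'pos : ∀ x ∈ Icc a b, 0 < Φ' x) (hκμ : κ < μ)
    (hμ : 0 < μ) (hμ1 : μ ≤ 1) :
    ∃ C, 0 ≤ C ∧ ∀ ρ ∈ Icc a b, ∀ ℓ ∈ Icc a b, ρ < ℓ →
      |mittagLefflerKernel Φ Φ' μ κ ω ℓ ρ| ≤ C * (ℓ - ρ) ^ (μ - 1) := by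
  obtain ⟨m, hm, hlow⟩ := exists_pos_mul_sub_le_sub hΦd hΦ'c hΦ'pos
  obtain ⟨M, hM⟩ := isCompact_Icc.exists_bound_of_continuousOn hΦ'c
  -- `|Φ b - Φ a|` rather than `Φ b - Φ a`: `rpow` of a negative base may be negative
  have hE := mittagLeffler_nonneg (sub_pos.2 hκμ).le hμ
    (by positivity : 0 ≤ |ω| * |Φ b - Φ a| ^ (μ - κ))
  refine ⟨_, mul_nonneg (mul_nonneg (abs_nonneg M) (rpow_nonneg hm.le _)) hE,
    fun ρ hρ ℓ hℓ hρℓ => abs_mittagLefflerKernel_le hκμ hμ hμ1 hm hρℓ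
      ((hM ρ hρ).trans (le_abs_self M)) (hlow ρ hρ ℓ hℓ hρℓ.le) ?_⟩
  have hab : a ≤ b := hρ.1.trans hρ.2
  have hρa := (mul_nonneg hm.le (sub_nonneg.2 hρ.1)).trans (hlow a (left_mem_Icc.2 hab) ρ hρ hρ.1)
  have hbℓ := (mul_nonneg hm.le (sub_nonneg.2 hℓ.2)).trans (hlow ℓ hℓ b (right_mem_Icc.2 hab) hℓ.2)
  linarith [le_abs_self (Φ b - Φ a)]

theorem continuousOn_mittagLefflerKernel {s : Set ℝ} {ℓ : ℝ} (hκμ : κ < μ) (hμ : 0 < μ)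
    (hΦ' : ContinuousOn Φ' s) (hΦ : ContinuousOn Φ s) (hlt : ∀ ρ ∈ s, Φ ρ < Φ ℓ) :
    ContinuousOn (mittagLefflerKernel Φ Φ' μ κ ω ℓ) s := by
  have hd : ContinuousOn (fun ρ => Φ ℓ - Φ ρ) s := continuousOn_const.sub hΦ
  have hne : ∀ ρ ∈ s, Φ ℓ - Φ ρ ≠ 0 := fun ρ hρ => (sub_pos.2 (hlt ρ hρ)).ne'
  exact (hΦ'.mul (hd.rpow_const fun ρ hρ => Or.inl (hne ρ hρ))).mul
    ((continuous_mittagLeffler (sub_pos.2 hκμ) hμ).comp_continuousOn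
      (continuousOn_const.mul (hd.rpow_const fun ρ hρ => Or.inl (hne ρ hρ))))

theorem intervalIntegrable_mittagLefflerKernel (hΦd : ∀ x ∈ Icc a b, HasDerivAt Φ (Φ' x) x)
    (hΦ'c : ContinuousOn Φ' (Icc a b)) (hΦ'pos : ∀ x ∈ Icc a b, 0 < Φ' x) (hκμ : κ < μ)
    (hμ : 0 < μ) (hμ1 : μ ≤ 1) {ℓ : ℝ} (hℓ : ℓ ∈ Icc a b) :
    IntervalIntegrable (mittagLefflerKernel Φ Φ' μ κ ω ℓ) volume a ℓ := by
  obtain ⟨m, hm, hlow⟩ := exists_pos_mul_sub_le_sub hΦd hΦ'c hΦ'pos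
  obtain ⟨C, -, hC⟩ := exists_abs_mittagLefflerKernel_le (ω := ω) hΦd hΦ'c hΦ'pos hκμ hμ hμ1
  have hsub : Ioo a ℓ ⊆ Icc a b := Ioo_subset_Icc_self.trans (Icc_subset_Icc_right hℓ.2)
  refine .of_abs_le_mul_sub_rpow hℓ.1 hμ (continuousOn_mittagLefflerKernel hκμ hμ (hΦ'c.mono hsub)
    (fun x hx => (hΦd x (hsub hx)).continuousAt.continuousWithinAt) fun ρ hρ => ?_)
    fun ρ hρ => hC ρ (hsub hρ) ℓ hℓ hρ.2
  exact sub_pos.1 ((mul_pos hm (sub_pos.2 hρ.2)).trans_le (hlow ρ (hsub hρ) ℓ hℓ hρ.2.le))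

end Kernel

theorem uniqueness_of_solutions_general
    (a b : ℝ)
    (Φ Φ' : ℝ → ℝ)
    (hΦd : ∀ x ∈ Icc a b, HasDerivAt Φ (Φ' x) x)
    (hΦ'c : ContinuousOn Φ' (Icc a b))
    (hΦ'pos : ∀ x ∈ Icc a b, 0 < Φ' x)
    (μ κ ω za : ℝ) (hκ0 : 0 < κ) (hκμ : κ < μ) (hμ1 : μ < 1)
    (F : ℝ → ℝ → ℝ)
    (hFc : ContinuousOn (fun p : ℝ × ℝ => F p.1 p.2) (Icc a b ×ˢ (univ : Set ℝ)))
    (L : ℝ) (hL : 0 < L)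
    (hlip : ∀ ℓ ∈ Icc a b, ∀ x y : ℝ, |F ℓ y - F ℓ x| ≤ L * |y - x|)
    (z zb : ℝ → ℝ) (hzc : ContinuousOn z (Icc a b)) (hzbc : ContinuousOn zb (Icc a b))
    (hz : ∀ ℓ ∈ Icc a b,
      z ℓ = za + ∫ ρ in a..ℓ,
        Φ' ρ * (Φ ℓ - Φ ρ) ^ (μ - 1) *
          mittagLeffler (μ - κ) μ (-ω * (Φ ℓ - Φ ρ) ^ (μ - κ)) * F ρ (z ρ))
    (hzb : ∀ ℓ ∈ Icc a b,
      zb ℓ = za + ∫ ρ in a..ℓ,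
        Φ' ρ * (Φ ℓ - Φ ρ) ^ (μ - 1) *
          mittagLeffler (μ - κ) μ (-ω * (Φ ℓ - Φ ρ) ^ (μ - κ)) * F ρ (zb ρ)) :
    ∀ ℓ ∈ Icc a b, z ℓ = zb ℓ := by
  have hμ : 0 < μ := hκ0.trans hκμ
  obtain ⟨C, hC0, hC⟩ := exists_abs_mittagLefflerKernel_le (ω := ω) hΦd hΦ'c hΦ'pos hκμ hμ hμ1.le
  have hFy : ∀ y : ℝ → ℝ, ContinuousOn y (Icc a b) → ContinuousOn (fun ρ => F ρ (y ρ)) (Icc a b) :=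
    fun y hy => hFc.comp (continuousOn_id.prodMk hy) fun ρ hρ => ⟨hρ, mem_univ _⟩
  have hw : ContinuousOn (fun x => |z x - zb x|) (Icc a b) := (hzc.sub hzbc).abs
  have hle : ∀ ℓ ∈ Icc a b,
      |z ℓ - zb ℓ| ≤ C * L * ∫ ρ in a..ℓ, (ℓ - ρ) ^ (μ - 1) * |z ρ - zb ρ| := by
    intro ℓ hℓ
    have hsub : Icc a ℓ ⊆ Icc a b := Icc_subset_Icc_right hℓ.2
    rw [hz ℓ hℓ, hzb ℓ hℓ, add_sub_add_left_eq_sub]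
    simp only [← mittagLefflerKernel.eq_1]
    exact abs_integral_mul_sub_integral_mul_le hℓ.1 hμ
      (intervalIntegrable_mittagLefflerKernel hΦd hΦ'c hΦ'pos hκμ hμ hμ1.le hℓ)
      ((hFy z hzc).mono hsub) ((hFy zb hzbc).mono hsub) (hw.mono hsub)
      (fun ρ hρ => hC ρ ⟨hρ.1.le, hρ.2.le.trans hℓ.2⟩ ℓ hℓ hρ.2)
      fun ρ hρ => hlip ρ (hsub (Ioo_subset_Icc_self hρ)) (zb ρ) (z ρ)
  intro ℓ hℓ
  exact sub_eq_zero.1 <| abs_eq_zero.1 <| eq_zero_of_le_mul_integral_sub_rpow_mul hμ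
    (mul_nonneg hC0 hL.le) hw (fun _ _ => abs_nonneg _) hle ℓ hℓ

/-- Uniqueness: two continuous solutions of the integral equation with
the same initial value `z_a` coincide on `[a,b]`. -/
theorem uniqueness_of_solutions
    (a b : ℝ) (hab : a < b)
    (Φ Φ' : ℝ → ℝ)
    (hΦd : ∀ x ∈ Icc a b, HasDerivAt Φ (Φ' x) x)
    (hΦ'c : ContinuousOn Φ' (Icc a b))
    (hΦ'pos : ∀ x ∈ Icc a b, 0 < Φ' x)
    (μ κ ω za : ℝ) (hκ0 : 0 < κ) (hκμ : κ < μ) (hμ1 : μ < 1) (hω : 0 < ω)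
    (F : ℝ → ℝ → ℝ)
    (hFc : ContinuousOn (fun p : ℝ × ℝ => F p.1 p.2) (Icc a b ×ˢ (univ : Set ℝ)))
    (L : ℝ) (hL : 0 < L)
    (hlip : ∀ ℓ ∈ Icc a b, ∀ x y : ℝ, |F ℓ y - F ℓ x| ≤ L * |y - x|)
    (z zb : ℝ → ℝ) (hzc : ContinuousOn z (Icc a b)) (hzbc : ContinuousOn zb (Icc a b))
    (hz : ∀ ℓ ∈ Icc a b,
      z ℓ = za + ∫ ρ in a..ℓ,
        Φ' ρ * (Φ ℓ - Φ ρ) ^ (μ - 1) *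
          mittagLeffler (μ - κ) μ (-ω * (Φ ℓ - Φ ρ) ^ (μ - κ)) * F ρ (z ρ))
    (hzb : ∀ ℓ ∈ Icc a b,
      zb ℓ = za + ∫ ρ in a..ℓ,
        Φ' ρ * (Φ ℓ - Φ ρ) ^ (μ - 1) *
          mittagLeffler (μ - κ) μ (-ω * (Φ ℓ - Φ ρ) ^ (μ - κ)) * F ρ (zb ρ)) :
    ∀ ℓ ∈ Icc a b, z ℓ = zb ℓ :=
  uniqueness_of_solutions_general a b Φ Φ' hΦd hΦ'c hΦ'pos μ κ ω za hκ0 hκμ hμ1 F hFc L hL hlip z zb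
    hzc hzbc hz hzb
end
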